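/- arXiv:2508.02564 — 8 statements merged into one kernel-verified Lean document; each statement's English description precedes it below -/
import Mathlib

section
/- A set S ⊆ V(G) is an ℓ-leaky forcing set of G if and only if S intersects every ℓ-leaky fort of G. -/
/-!
Call a vertex outside `F` with exactly one neighbour in `F` a boundary vertex of `F`; only
boundary vertices can force into `F`. If `S` misses a leaky fort `F`, declare its (at most ℓ)
boundary vertices leaks: then nothing in `F` is ever forced. Conversely, for any leak set `L`
the vertices never forced form a set whose boundary lies in `L`, so if it is nonempty it is a
leaky fort, necessarily disjoint from `S`.
-/

open SimpleGraph

namespace LF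

variable {V : Type*}

/-- Vertices eventually forced blue, starting from `S`, with leak set `L`:
a blue vertex not in `L` whose every neighbor other than `w` is blue forces `w`. -/
inductive Forced (G : SimpleGraph V) (L S : Set V) : V → Prop
  | init (v : V) (hv : v ∈ S) : Forced G L S v
  | force (b w : V) (hb : Forced G L S b) (hbL : b ∉ L) (hadj : G.Adj b w)
      (hall : ∀ u, G.Adj b u → u ≠ w → Forced G L S u) : Forced G L S w

/-- `S` is an ℓ-leaky forcing set of `G`. -/
def IsLeakyForcingSet (G : SimpleGraph V) (ℓ : ℕ) (S : Set V) : Prop :=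
  ∀ L : Set V, L.ncard ≤ ℓ → ∀ v, Forced G L S v

/-- The ℓ-leaky forcing number `Z_{(ℓ)}(G)`. -/
noncomputable def leakyForcingNumber (G : SimpleGraph V) [Fintype V] (ℓ : ℕ) : ℕ :=
  sInf {k | ∃ S : Finset V, S.card = k ∧ IsLeakyForcingSet G ℓ ↑S}

/-- An ℓ-leaky fort: a nonempty set `F` such that at most ℓ vertices outside `F`
have exactly one neighbor in `F`. -/
def IsLeakyFort (G : SimpleGraph V) (ℓ : ℕ) (F : Set V) : Prop :=
  F.Nonempty ∧ {v | v ∉ F ∧ ∃! u, u ∈ F ∧ G.Adj v u}.ncard ≤ ℓ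

/-- The path graph on `n` vertices. -/
def pathGraph (n : ℕ) : SimpleGraph (Fin n) :=
  SimpleGraph.fromRel (fun i j => i.val + 1 = j.val)

/-- The cycle graph on `n` vertices. -/
def cycleGraph (n : ℕ) : SimpleGraph (Fin n) :=
  SimpleGraph.fromRel (fun i j => (i.val + 1) % n = j.val)

/-- The star graph on `n` vertices, with center `0`. -/
def starGraph (n : ℕ) : SimpleGraph (Fin n) :=
  SimpleGraph.fromRel (fun i _ => i.val = 0)

/-- The generalized Petersen graph `P(n,k)`: `Sum.inl i` is the inner vertex `x_{i+1}`,
`Sum.inr i` is the outer vertex `y_{i+1}` (0-indexed). -/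
def petersen (n k : ℕ) : SimpleGraph (Fin n ⊕ Fin n) :=
  SimpleGraph.fromRel (fun a b =>
    match a, b with
    | Sum.inr i, Sum.inr j => (i.val + 1) % n = j.val
    | Sum.inl i, Sum.inr j => i = j
    | Sum.inl i, Sum.inl j => (i.val + k) % n = j.val
    | _, _ => False)

variable {G : SimpleGraph V} {L S F : Set V}

def forcingBoundary (G : SimpleGraph V) (F : Set V) : Set V :=
  {v | v ∉ F ∧ ∃! u, u ∈ F ∧ G.Adj v u}

theorem Forced.notMem_of_disjoint (hSF : Disjoint S F) (hL : forcingBoundary G F ⊆ L) {v : V}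
    (hv : Forced G L S v) : v ∉ F := by
  induction hv with
  | init v hvS => exact Set.disjoint_left.mp hSF hvS
  | force b w _ hbL hbw _ ih_b ih_nbrs =>
    intro hwF
    have hb_not_unique : ¬ ∃! u, u ∈ F ∧ G.Adj b u := fun h => hbL (hL ⟨ih_b, h⟩)
    obtain ⟨y, ⟨hyF, hby⟩, hyw⟩ : ∃ y, (y ∈ F ∧ G.Adj b y) ∧ y ≠ w := by
      by_contra! hc
      exact hb_not_unique ⟨w, ⟨hwF, hbw⟩, hc⟩
    exact ih_nbrs y hby hyw hyF

theorem forcingBoundary_setOf_not_forced_subset_leaks :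
    forcingBoundary G {v | ¬ Forced G L S v} ⊆ L := by
  rintro w ⟨hw, u, ⟨hu, hwu⟩, hu_unique⟩
  by_contra hwL
  refine hu (.force w u (not_not.mp hw) hwL hwu fun x hwx hxu => ?_)
  by_contra hx
  exact hxu (hu_unique x ⟨hx, hwx⟩)

end LF

theorem stmt2 {V : Type*} [Fintype V] (G : SimpleGraph V) (ℓ : ℕ) (S : Set V) :
    LF.IsLeakyForcingSet G ℓ S ↔
      ∀ F : Set V, LF.IsLeakyFort G ℓ F → (S ∩ F).Nonempty := by
  constructor
  · rintro hS F ⟨⟨f, hf⟩, hF⟩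
    by_contra hSF
    rw [Set.not_nonempty_iff_eq_empty, ← Set.disjoint_iff_inter_eq_empty] at hSF
    exact LF.Forced.notMem_of_disjoint hSF subset_rfl (hS _ hF f) hf
  · intro h L hL v
    by_contra hv
    have hfort : LF.IsLeakyFort G ℓ {v | ¬ LF.Forced G L S v} :=
      ⟨⟨v, hv⟩, (Set.ncard_le_ncard LF.forcingBoundary_setOf_not_forced_subset_leaks).trans hL⟩
    obtain ⟨s, hsS, hs⟩ := h _ hfort
    exact hs (.init s hsS)
end

section
/- For the cycle graph C_n on n ≥ 3 vertices: for ℓ = 0 or ℓ = 1 the ℓ-leaky forcing number is 2, and for every ℓ ≥ 2 the ℓ-leaky forcing number is n. -/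
open SimpleGraph

/-!
Two adjacent blue vertices of a cycle keep forcing in both directions until the chain meets a
leak, so `{0, 1}` survives one leak. A single blue vertex forces nothing, since every vertex has
a second neighbor that would have to be blue already. For `ℓ ≥ 2` the adversary leaks both
neighbors of a white vertex, which then can never be forced, so every vertex has to be blue from
the start.
-/

namespace LF

section General

variable {V : Type*} {G : SimpleGraph V} {ℓ : ℕ} {S : Set V}

theorem IsLeakyForcingSet.mono {ℓ' : ℕ} (hS : IsLeakyForcingSet G ℓ S) (hℓ : ℓ' ≤ ℓ) :
    IsLeakyForcingSet G ℓ' S :=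
  fun L hL => hS L (hL.trans hℓ)

theorem isLeakyForcingSet_univ : IsLeakyForcingSet G ℓ Set.univ :=
  fun _ _ v => .init v trivial

theorem mem_of_forced_of_subsingleton {L : Set V}
    (hG : ∀ b w, G.Adj b w → ∃ u, G.Adj b u ∧ u ≠ w) (hS : S.Subsingleton) {v : V}
    (hv : Forced G L S v) : v ∈ S := by
  induction hv with
  | init v hv => exact hv
  | force b w _ _ hbw hall ihb ihall =>
    obtain ⟨u, hbu, huw⟩ := hG b w hbw
    exact absurd (hS ihb (ihall u hbu huw)) hbu.ne

theorem IsLeakyForcingSet.nontrivial [Nontrivial V]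
    (hG : ∀ b w, G.Adj b w → ∃ u, G.Adj b u ∧ u ≠ w) (hS : IsLeakyForcingSet G ℓ S) :
    S.Nontrivial := by
  by_contra hS'
  have hmem v : v ∈ S :=
    mem_of_forced_of_subsingleton hG (Set.not_nontrivial_iff.mp hS') (hS ∅ (by simp) v)
  obtain ⟨x, y, hxy⟩ := exists_pair_ne V
  exact hxy (Set.not_nontrivial_iff.mp hS' (hmem x) (hmem y))

theorem not_forced_of_neighborSet_subset {L : Set V} {v : V} (hvS : v ∉ S)
    (hvL : G.neighborSet v ⊆ L) : ¬ Forced G L S v := by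
  rintro (_ | ⟨b, _, _, hbL, hbv, _⟩)
  · exact hvS ‹_›
  · exact hbL (hvL hbv.symm)

theorem IsLeakyForcingSet.mem_of_ncard_neighborSet_le [Finite V] (hS : IsLeakyForcingSet G ℓ S)
    {v : V} (hv : (G.neighborSet v).ncard ≤ ℓ) : v ∈ S := by
  by_contra hvS
  exact not_forced_of_neighborSet_subset hvS subset_rfl (hS _ hv v)

theorem leakyForcingNumber_eq [Fintype V] (S : Finset V) (hS : IsLeakyForcingSet G ℓ S)
    (hmin : ∀ T : Finset V, IsLeakyForcingSet G ℓ T → S.card ≤ T.card) :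
    leakyForcingNumber G ℓ = S.card :=
  IsLeast.csInf_eq ⟨⟨S, rfl, hS⟩, by rintro _ ⟨T, rfl, hT⟩; exact hmin T hT⟩

end General

section Cycle

open Fin.CommRing

variable {n : ℕ} [NeZero n] {L S : Set (Fin n)}

theorem cycleGraph_adj_iff (hn : 2 ≤ n) {a b : Fin n} :
    (cycleGraph n).Adj a b ↔ b = a + 1 ∨ b = a - 1 := by
  have h1 : (1 : Fin n) ≠ 0 := by
    simp [Fin.ext_iff, Nat.mod_eq_of_lt (show 1 < n by omega)]
  have hsucc (x y : Fin n) : (x.val + 1) % n = y.val ↔ y = x + 1 := by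
    rw [Fin.ext_iff, Fin.val_add, Fin.val_one', Nat.add_mod_mod, eq_comm]
  simp only [cycleGraph, SimpleGraph.fromRel_adj, hsucc, ne_eq, eq_sub_iff_add_eq]
  constructor
  · rintro ⟨-, h | h⟩
    · exact .inl h
    · exact .inr h.symm
  · rintro (rfl | rfl)
    · exact ⟨by simpa using h1.symm, .inl rfl⟩
    · exact ⟨by simpa [sub_eq_self] using h1, .inr rfl⟩

theorem cycleGraph_neighborSet (hn : 2 ≤ n) (v : Fin n) :
    (cycleGraph n).neighborSet v = {v + 1, v - 1} := by
  ext u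
  exact cycleGraph_adj_iff hn

theorem ncard_cycleGraph_neighborSet_le (hn : 2 ≤ n) (v : Fin n) :
    ((cycleGraph n).neighborSet v).ncard ≤ 2 := by
  rw [cycleGraph_neighborSet hn]
  exact (Set.ncard_insert_le _ _).trans (by simp)

theorem add_one_ne_sub_one (hn : 3 ≤ n) (v : Fin n) : v + 1 ≠ v - 1 := by
  intro h
  have h2 : ((2 : ℕ) : Fin n) = 0 := by
    push_cast
    linear_combination h
  rw [Fin.ext_iff, Fin.val_natCast, Nat.mod_eq_of_lt (by omega)] at h2
  simp at h2

theorem cycleGraph_exists_adj_ne (hn : 3 ≤ n) {b w : Fin n} (hbw : (cycleGraph n).Adj b w) :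
    ∃ u, (cycleGraph n).Adj b u ∧ u ≠ w := by
  have hadj {u : Fin n} := cycleGraph_adj_iff (a := b) (b := u) (by omega)
  rcases hadj.mp hbw with rfl | rfl
  · exact ⟨b - 1, hadj.mpr (.inr rfl), (add_one_ne_sub_one hn b).symm⟩
  · exact ⟨b + 1, hadj.mpr (.inl rfl), add_one_ne_sub_one hn b⟩

theorem forced_add_of_forced_sub (hn : 2 ≤ n) {b d : Fin n} (hd : d = 1 ∨ d = -1)
    (hb : Forced (cycleGraph n) L S b) (hbL : b ∉ L) (hbd : Forced (cycleGraph n) L S (b - d)) :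
    Forced (cycleGraph n) L S (b + d) := by
  have hadj {u : Fin n} : (cycleGraph n).Adj b u ↔ u = b + d ∨ u = b - d := by
    rcases hd with rfl | rfl
    · exact cycleGraph_adj_iff hn
    · rw [cycleGraph_adj_iff hn, or_comm, sub_neg_eq_add, ← sub_eq_add_neg]
  refine .force b (b + d) hb hbL (hadj.mpr (.inl rfl)) fun u hu hne => ?_
  rw [(hadj.mp hu).resolve_left hne]
  exact hbd

theorem forced_add_natCast_mul (hn : 2 ≤ n) {a d : Fin n} (hd : d = 1 ∨ d = -1)
    (ha : Forced (cycleGraph n) L S a) (had : Forced (cycleGraph n) L S (a + d)) (m : ℕ)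
    (hL : ∀ i : ℕ, 1 ≤ i → i ≤ m → a + i * d ∉ L) :
    ∀ i ≤ m + 1, Forced (cycleGraph n) L S (a + i * d) := by
  induction m with
  | zero =>
    intro i hi
    interval_cases i <;> simpa
  | succ m ih =>
    have ih := ih fun i hi1 hi2 => hL i hi1 (by omega)
    intro i hi
    rcases Nat.lt_or_ge i (m + 2) with hi' | hi'
    · exact ih i (by omega)
    obtain rfl : i = m + 2 := by omega
    have key := forced_add_of_forced_sub hn hd (ih (m + 1) le_rfl) (hL (m + 1) (by omega) le_rfl)
      (by rw [Nat.cast_succ, add_one_mul, ← add_assoc, add_sub_cancel_right]; exact ih m (by omega))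
    rwa [Nat.cast_succ (m + 1), add_one_mul, ← add_assoc]

/-- With a single leak `p`, the chain started at `0, 1` runs forward up to `p`, and the chain
started at `1, 0` runs backward through `0, -1, …` down to `p + 1`. -/
theorem isLeakyForcingSet_cycleGraph_one (hn : 2 ≤ n) :
    IsLeakyForcingSet (cycleGraph n) 1 {0, 1} := by
  intro L hL v
  have hLsub : L.Subsingleton := Set.ncard_le_one_iff_subsingleton.mp hL
  have h0 : Forced (cycleGraph n) L {0, 1} 0 := .init 0 (by simp)
  have h1 : Forced (cycleGraph n) L {0, 1} 1 := .init 1 (by simp)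
  obtain ⟨k, hk, rfl⟩ : ∃ k < n, (k : Fin n) = v := ⟨v.val, v.isLt, Fin.cast_val_eq_self v⟩
  by_cases hfwd : ∀ i : ℕ, 1 ≤ i → i ≤ k - 1 → (i : Fin n) ∉ L
  · rcases k with _ | k
    · simpa using h0
    · simpa using forced_add_natCast_mul hn (.inl rfl) h0 (by simpa using h1) k
        (fun i hi1 hi2 => by simpa using hfwd i hi1 (by omega)) (k + 1) le_rfl
  · push Not at hfwd
    obtain ⟨p, hp1, hpk, hpL⟩ := hfwd
    have hback := forced_add_natCast_mul hn (.inr rfl) h1 (by simpa using h0) (n - k)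
      (fun i hi1 hi2 hiL => ?_) (n - k + 1) le_rfl
    · have hnk : ((n - k : ℕ) : Fin n) + k = 0 := by
        rw [← Nat.cast_add, Nat.sub_add_cancel hk.le, Fin.natCast_self]
      convert hback using 1
      push_cast
      linear_combination hnk
    · have hpi : ((p + i : ℕ) : Fin n) = 1 := by
        push_cast
        linear_combination hLsub hpL hiL
      have := congrArg Fin.val hpi
      rw [Fin.val_natCast, Fin.val_one', Nat.mod_eq_of_lt (by omega), Nat.mod_eq_of_lt (by omega)]
        at this
      omega

end Cycle

end LF

theorem stmt4 (n : ℕ) (hn : 3 ≤ n) :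
    LF.leakyForcingNumber (LF.cycleGraph n) 0 = 2 ∧
    LF.leakyForcingNumber (LF.cycleGraph n) 1 = 2 ∧
    ∀ ℓ, 2 ≤ ℓ → LF.leakyForcingNumber (LF.cycleGraph n) ℓ = n := by
  have : NeZero n := ⟨by omega⟩
  have : Nontrivial (Fin n) := Fin.nontrivial_iff_two_le.mpr (by omega)
  have hpair : ({0, 1} : Finset (Fin n)).card = 2 := by
    rw [Finset.card_pair]
    simp [Fin.ext_iff, Nat.mod_eq_of_lt (show 1 < n by omega)]
  have h01 := LF.isLeakyForcingSet_cycleGraph_one (n := n) (by omega)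
  have hmin (ℓ : ℕ) (T : Finset (Fin n)) (hT : LF.IsLeakyForcingSet (LF.cycleGraph n) ℓ T) :
      ({0, 1} : Finset (Fin n)).card ≤ T.card :=
    hpair ▸ Finset.one_lt_card_iff_nontrivial.mpr
      (hT.nontrivial fun _ _ => LF.cycleGraph_exists_adj_ne hn)
  refine ⟨?_, ?_, fun ℓ hℓ => ?_⟩
  · exact (LF.leakyForcingNumber_eq _ (by simpa using h01.mono zero_le_one) (hmin 0)).trans hpair
  · exact (LF.leakyForcingNumber_eq _ (by simpa using h01) (hmin 1)).trans hpair
  · refine (LF.leakyForcingNumber_eq Finset.univ (by simpa using LF.isLeakyForcingSet_univ)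
      fun T hT => Finset.card_le_card fun v _ => ?_).trans (Finset.card_fin n)
    exact hT.mem_of_ncard_neighborSet_le ((LF.ncard_cycleGraph_neighborSet_le (by omega) v).trans hℓ)
end

section
/- If T is a tree on at least 2 vertices and ℓ ≥ 1, then the ℓ-leaky forcing number of T equals the number of vertices of T having degree at most ℓ. -/
open SimpleGraph

/-!
Every ℓ-leaky forcing set contains each vertex `v` of degree at most `ℓ`: if all neighbours of
`v` leak, nothing can force `v`. Conversely, in a tree these vertices suffice. Root the tree at
any vertex `r`. A vertex of degree `> ℓ ≥ 1` has at least two neighbours, hence a child, so a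
leak-free subtree is forced from the bottom up: each vertex is forced by a child, whose other
neighbours are its own children. For a vertex `x` of degree `> ℓ`, the subtrees hanging from
its neighbours (rooted at `x`) are disjoint and outnumber the at most `ℓ` leaks, so one of them
is leak-free, and its top vertex forces `x`.
-/

namespace SimpleGraph

variable {V : Type*} {G : SimpleGraph V}

lemma ncard_neighborSet_eq_degree (v : V) [Fintype (G.neighborSet v)] :
    (G.neighborSet v).ncard = G.degree v := by
  rw [← card_neighborSet_eq_degree, Set.ncard_eq_toFinset_card', Set.toFinset_card]

lemma dist_le_length_of_mem_support {u v w : V} (p : G.Walk u v) (hw : w ∈ p.support) :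
    G.dist u w ≤ p.length := by
  classical
  exact (G.dist_le _).trans (p.length_takeUntil_le_length hw)

lemma Connected.dist_lt_card [Fintype V] (hG : G.Connected) (u v : V) :
    G.dist u v < Fintype.card V := by
  obtain ⟨p, hp, hlen⟩ := hG.exists_path_of_dist u v
  exact hlen ▸ hp.length_lt

lemma IsTree.eq_of_adj_of_dist_add_one_eq (hT : G.IsTree) (r : V) {x y₁ y₂ : V}
    (h₁ : G.Adj x y₁) (h₂ : G.Adj x y₂)
    (d₁ : G.dist r y₁ + 1 = G.dist r x) (d₂ : G.dist r y₂ + 1 = G.dist r x) : y₁ = y₂ := by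
  have extend : ∀ y, G.Adj x y → G.dist r y + 1 = G.dist r x →
      ∃ p : G.Walk r x, p.IsPath ∧ p.penultimate = y := by
    intro y h d
    obtain ⟨q, hq, hlen⟩ := hT.connected.exists_path_of_dist r y
    have hx : x ∉ q.support := fun hx => by
      have := dist_le_length_of_mem_support q hx
      omega
    exact ⟨q.concat h.symm, hq.concat hx h.symm, q.penultimate_concat _⟩
  obtain ⟨p₁, hp₁, rfl⟩ := extend y₁ h₁ d₁
  obtain ⟨p₂, hp₂, rfl⟩ := extend y₂ h₂ d₂
  rw [(hT.existsUnique_path r x).unique hp₁ hp₂]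

lemma IsTree.exists_adj_dist_eq_add_one (hT : G.IsTree) (r : V) {z : V}
    [Fintype (G.neighborSet z)] (hz : 1 < G.degree z) :
    ∃ c, G.Adj z c ∧ G.dist r c = G.dist r z + 1 := by
  rw [← card_neighborFinset_eq_degree, Finset.one_lt_card] at hz
  obtain ⟨y₁, hy₁, y₂, hy₂, hne⟩ := hz
  rw [mem_neighborFinset] at hy₁ hy₂
  rcases hT.dist_eq_dist_add_one_of_adj r hy₁ with d₁ | d₁
  · rcases hT.dist_eq_dist_add_one_of_adj r hy₂ with d₂ | d₂
    · exact absurd (hT.eq_of_adj_of_dist_add_one_eq r hy₁ hy₂ d₁.symm d₂.symm) hne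
    · exact ⟨y₂, hy₂, d₂⟩
  · exact ⟨y₁, hy₁, d₁⟩

/-- The vertices `y` such that `z` lies on a shortest `r`–`y` path; in a tree rooted at `r`,
the subtree hanging from `z`. -/
def descendants (G : SimpleGraph V) (r z : V) : Set V :=
  {y | G.dist r y = G.dist r z + G.dist z y}

lemma self_mem_descendants {r z : V} : z ∈ G.descendants r z := by
  simp [descendants]

lemma mem_descendants_of_adj {r z c : V} (hadj : G.Adj z c)
    (hc : G.dist r c = G.dist r z + 1) : c ∈ G.descendants r z := by
  rwa [descendants, Set.mem_ofPred_eq, dist_eq_one_iff_adj.mpr hadj]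

lemma Connected.descendants_subset (hG : G.Connected) {r z c : V}
    (hc : c ∈ G.descendants r z) : G.descendants r c ⊆ G.descendants r z := by
  intro y hy
  simp only [descendants, Set.mem_ofPred_eq] at hc hy ⊢
  have := hG.dist_triangle (u := z) (v := c) (w := y)
  have := hG.dist_triangle (u := r) (v := z) (w := y)
  omega

lemma IsTree.disjoint_descendants (hT : G.IsTree) {x w₁ w₂ : V} (h₁ : G.Adj x w₁)
    (h₂ : G.Adj x w₂) (hne : w₁ ≠ w₂) :
    Disjoint (G.descendants x w₁) (G.descendants x w₂) := by
  refine Set.disjoint_left.mpr fun y hy₁ hy₂ => hne ?_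
  simp only [descendants, Set.mem_ofPred_eq, dist_eq_one_iff_adj.mpr h₁,
    dist_eq_one_iff_adj.mpr h₂] at hy₁ hy₂
  refine hT.eq_of_adj_of_dist_add_one_eq y h₁ h₂ ?_ ?_ <;>
    rw [dist_comm (u := y), dist_comm (u := y)] <;> omega

lemma IsTree.exists_adj_disjoint_descendants (hT : G.IsTree) {x : V}
    [Fintype (G.neighborSet x)] {L : Set V} (hLfin : L.Finite) (hL : L.ncard < G.degree x) :
    ∃ w, G.Adj x w ∧ Disjoint (G.descendants x w) L := by
  by_contra! h
  have hmeet : ∀ w ∈ G.neighborSet x, ∃ y ∈ L, y ∈ G.descendants x w := fun w hw => by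
    obtain ⟨y, hyd, hyL⟩ := Set.not_disjoint_iff.mp (h w hw)
    exact ⟨y, hyL, hyd⟩
  choose! f hfL hfd using hmeet
  have hinj : Set.InjOn f (G.neighborSet x) := fun w₁ h₁ w₂ h₂ heq => by
    by_contra hne
    exact Set.disjoint_left.mp (hT.disjoint_descendants h₁ h₂ hne) (hfd w₁ h₁) (heq ▸ hfd w₂ h₂)
  have := Set.ncard_le_ncard_of_injOn f hfL hinj hLfin
  rw [ncard_neighborSet_eq_degree] at this
  omega

end SimpleGraph

namespace LF

open SimpleGraph

variable {V : Type*} {G : SimpleGraph V} {ℓ : ℕ} {L S : Set V}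

lemma IsLeakyForcingSet.mem_of_degree_le {v : V} [Fintype (G.neighborSet v)]
    (hS : IsLeakyForcingSet G ℓ S) (hv : G.degree v ≤ ℓ) : v ∈ S := by
  cases hS (G.neighborSet v) (by rwa [ncard_neighborSet_eq_degree]) v with
  | init _ hv => exact hv
  | force b _ _ hbL hadj _ => exact absurd hadj.symm hbL

lemma Forced.of_child (hT : G.IsTree) {r z c : V} (hadj : G.Adj z c)
    (hc : G.dist r c = G.dist r z + 1) (hcL : c ∉ L) (hcF : Forced G L S c)
    (hchildren : ∀ y, G.Adj c y → G.dist r y = G.dist r c + 1 → Forced G L S y) :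
    Forced G L S z :=
  .force c z hcF hcL hadj.symm fun y hy hyz => hchildren y hy <|
    (hT.dist_eq_dist_add_one_of_adj r hy).resolve_left fun h =>
      hyz (hT.eq_of_adj_of_dist_add_one_eq r hy hadj.symm h.symm hc.symm)

lemma leakyForcingNumber_eq_card [Fintype V] {S₀ : Finset V} (h₀ : IsLeakyForcingSet G ℓ S₀)
    (hmin : ∀ S, IsLeakyForcingSet G ℓ S → (S₀ : Set V) ⊆ S) :
    leakyForcingNumber G ℓ = S₀.card := by
  refine le_antisymm (Nat.sInf_le ⟨S₀, rfl, h₀⟩) ?_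
  obtain ⟨S, hcard, hS⟩ : leakyForcingNumber G ℓ ∈
      {k | ∃ S : Finset V, S.card = k ∧ IsLeakyForcingSet G ℓ ↑S} :=
    Nat.sInf_mem ⟨_, S₀, rfl, h₀⟩
  rw [← hcard]
  exact Finset.card_le_card (Finset.coe_subset.mp (hmin _ hS))

variable [Fintype V] [DecidableRel G.Adj]

theorem forced_of_disjoint_descendants (hT : G.IsTree) (hℓ : 1 ≤ ℓ)
    (hS : ∀ w, G.degree w ≤ ℓ → w ∈ S) (r z : V) (hz : Disjoint (G.descendants r z) L) :
    Forced G L S z := by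
  by_cases hdeg : G.degree z ≤ ℓ
  · exact .init z (hS z hdeg)
  obtain ⟨c, hadj, hc⟩ := hT.exists_adj_dist_eq_add_one r (by omega : 1 < G.degree z)
  have hcz := mem_descendants_of_adj hadj hc
  have hsub := hT.connected.descendants_subset hcz
  refine Forced.of_child hT hadj hc (Set.disjoint_left.mp hz hcz)
    (forced_of_disjoint_descendants hT hℓ hS r c (hz.mono_left hsub)) fun y hy hyc => ?_
  have hyc' := (hT.connected.descendants_subset (mem_descendants_of_adj hy hyc)).trans hsub
  exact forced_of_disjoint_descendants hT hℓ hS r y (hz.mono_left hyc')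
termination_by Fintype.card V - G.dist r z
decreasing_by
  all_goals have := hT.connected.dist_lt_card r z
  all_goals have := hT.connected.dist_lt_card r c
  all_goals omega

theorem isLeakyForcingSet_of_isTree (hT : G.IsTree) (hℓ : 1 ≤ ℓ)
    (hS : ∀ w, G.degree w ≤ ℓ → w ∈ S) : IsLeakyForcingSet G ℓ S := by
  intro L hL x
  by_cases hdeg : G.degree x ≤ ℓ
  · exact .init x (hS x hdeg)
  obtain ⟨w, hadj, hw⟩ := hT.exists_adj_disjoint_descendants (x := x) L.toFinite (by omega)
  have hwx : G.dist x w = G.dist x x + 1 := by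
    rw [SimpleGraph.dist_self, dist_eq_one_iff_adj.mpr hadj]
  refine Forced.of_child hT hadj hwx (Set.disjoint_left.mp hw self_mem_descendants)
    (forced_of_disjoint_descendants hT hℓ hS x w hw) fun y hy hyw => ?_
  have hyw' := hT.connected.descendants_subset (mem_descendants_of_adj hy hyw)
  exact forced_of_disjoint_descendants hT hℓ hS x y (hw.mono_left hyw')

end LF

theorem stmt6_general {V : Type*} [Fintype V] (G : SimpleGraph V) [DecidableRel G.Adj]
    (hT : G.IsTree) (ℓ : ℕ) (hℓ : 1 ≤ ℓ) :
    LF.leakyForcingNumber G ℓ =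
      (Finset.univ.filter fun v => G.degree v ≤ ℓ).card := by
  apply LF.leakyForcingNumber_eq_card
  · exact LF.isLeakyForcingSet_of_isTree hT hℓ fun w hw => by simp [hw]
  · exact fun S hS w hw => hS.mem_of_degree_le (Finset.mem_filter.mp hw).2

theorem stmt6 {V : Type*} [Fintype V] (G : SimpleGraph V) [DecidableRel G.Adj]
    (hT : G.IsTree) (hn : 2 ≤ Fintype.card V) (ℓ : ℕ) (hℓ : 1 ≤ ℓ) :
    LF.leakyForcingNumber G ℓ =
      (Finset.univ.filter fun v => G.degree v ≤ ℓ).card :=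
  stmt6_general G hT ℓ hℓ
end

section
/- Let T be a tree with at least 2 vertices and let v be any leaf of T. Then the set of all leaves of T other than v is a (0-leaky) zero forcing set of T. -/
open SimpleGraph

/-!
Root the tree at `v` and measure depth by the distance to `v`. Every vertex other than `v` has
exactly one shallower neighbour, its parent, and all its other neighbours lie one level deeper.
By downward induction on depth every vertex turns blue: a leaf other than `v` is blue from the
start, and every other vertex `w` (including `v`, which has a neighbour) has a child `c`; then
`c` and all children of `c` are deeper, hence blue, so `c` forces its only remaining white
neighbour `w`.
-/

namespace SimpleGraph

variable {V : Type*} {G : SimpleGraph V}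

lemma exists_adj_ne_of_degree_ne_one [Fintype V] [DecidableRel G.Adj] {w x : V}
    (hwx : G.Adj w x) (hw : G.degree w ≠ 1) : ∃ c, G.Adj w c ∧ c ≠ x := by
  by_contra! h
  exact hw (degree_eq_one_iff_existsUnique_adj.2 ⟨x, hwx, h⟩)

lemma Connected.exists_adj_dist_add_one_eq (hG : G.Connected) {r w : V} (hw : w ≠ r) :
    ∃ x, G.Adj x w ∧ G.dist r x + 1 = G.dist r w := by
  obtain ⟨p, -, hp⟩ := hG.exists_path_of_dist r w
  have hnil : ¬p.Nil := Walk.not_nil_of_ne hw.symm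
  have hle : G.dist r p.penultimate + 1 ≤ G.dist r w := by
    have := Walk.length_dropLast_add_one hnil
    have := dist_le p.dropLast
    omega
  refine ⟨p.penultimate, Walk.adj_penultimate hnil, ?_⟩
  have := (Walk.adj_penultimate hnil).diff_dist_adj (u := r)
  omega

lemma IsTree.eq_penultimate_of_adj_of_dist_add_one (hT : G.IsTree) {r x c : V}
    {p : G.Walk r c} (hp : p.IsPath) (hxc : G.Adj x c) (hx : G.dist r x + 1 = G.dist r c) :
    x = p.penultimate := by
  obtain ⟨q, -, hq⟩ := hT.connected.exists_path_of_dist r x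
  have hqc : (q.concat hxc).IsPath := (q.concat hxc).isPath_of_length_eq_dist (by simp [hq, hx])
  rw [(hT.existsUnique_path r c).unique hp hqc, Walk.penultimate_concat]

lemma IsTree.dist_eq_add_one_of_adj_of_ne (hT : G.IsTree) {r x c u : V} (hxc : G.Adj x c)
    (hx : G.dist r x + 1 = G.dist r c) (hcu : G.Adj c u) (hux : u ≠ x) :
    G.dist r u = G.dist r c + 1 := by
  obtain ⟨p, hp, -⟩ := hT.connected.exists_path_of_dist r c
  refine (hT.dist_eq_dist_add_one_of_adj r hcu).resolve_left fun hu => hux ?_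
  rw [hT.eq_penultimate_of_adj_of_dist_add_one hp hcu.symm hu.symm,
    hT.eq_penultimate_of_adj_of_dist_add_one hp hxc hx]

end SimpleGraph

namespace LF

variable {V : Type*} {G : SimpleGraph V} {r : V} {S : Set V}

lemma forced_of_adj_of_dist_add_one (hT : G.IsTree) {x c : V} (hxc : G.Adj x c)
    (hx : G.dist r x + 1 = G.dist r c)
    (hfar : ∀ u, G.dist r x < G.dist r u → Forced G ∅ S u) : Forced G ∅ S x :=
  .force c x (hfar c (by omega)) (Set.notMem_empty c) hxc.symm fun u hcu hux => hfar u <| by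
    have := hT.dist_eq_add_one_of_adj_of_ne hxc hx hcu hux
    omega

theorem forced_of_forall_degree_eq_one_mem [Fintype V] [DecidableRel G.Adj] (hT : G.IsTree)
    (hr : 0 < G.degree r) (hS : ∀ w, G.degree w = 1 → w ≠ r → w ∈ S) (w : V) :
    Forced G ∅ S w := by
  have hwf := Finite.wellFounded_of_trans_of_irrefl (InvImage (· > ·) (G.dist r))
  induction w using hwf.induction with
  | _ w ih =>
  obtain rfl | hwr := eq_or_ne w r
  · obtain ⟨c, hc⟩ := (G.degree_pos_iff_exists_adj w).1 hr
    exact forced_of_adj_of_dist_add_one hT hc (by rw [dist_self, dist_eq_one_iff_adj.2 hc]) ih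
  by_cases hleaf : G.degree w = 1
  · exact .init w (hS w hleaf hwr)
  obtain ⟨x, hxw, hx⟩ := hT.connected.exists_adj_dist_add_one_eq hwr
  obtain ⟨c, hwc, hcx⟩ := exists_adj_ne_of_degree_ne_one hxw.symm hleaf
  exact forced_of_adj_of_dist_add_one hT hwc
    (hT.dist_eq_add_one_of_adj_of_ne hxw hx hwc hcx).symm ih

end LF

theorem stmt7_general {V : Type*} [Fintype V] [DecidableEq V] (G : SimpleGraph V) [DecidableRel G.Adj]
    (hT : G.IsTree) (v : V) (hv : G.degree v = 1) :
    LF.IsLeakyForcingSet G 0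
      ↑((Finset.univ.filter fun w => G.degree w = 1) \ {v}) := by
  intro L hL
  obtain rfl : L = ∅ := (Set.ncard_eq_zero).1 (Nat.le_zero.1 hL)
  exact LF.forced_of_forall_degree_eq_one_mem hT (hv ▸ Nat.one_pos) fun w hw hwv => by
    simp [hw, hwv]

theorem stmt7 {V : Type*} [Fintype V] [DecidableEq V] (G : SimpleGraph V) [DecidableRel G.Adj]
    (hT : G.IsTree) (hn : 2 ≤ Fintype.card V) (v : V) (hv : G.degree v = 1) :
    LF.IsLeakyForcingSet G 0
      ↑((Finset.univ.filter fun w => G.degree w = 1) \ {v}) :=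
  stmt7_general G hT v hv
end

section
/- Let G be a unicyclic graph (a connected graph with exactly one cycle) and ℓ ≥ 3. Then the ℓ-leaky forcing number of G equals the number of vertices of G with degree at most ℓ. -/
open SimpleGraph

/-!
A vertex `v` of degree at most `ℓ` must be in every `ℓ`-leaky forcing set: leak all its
neighbours and nothing can force `v`. Conversely, let `S` contain all such vertices and suppose
some leak set `L` leaves a nonempty set `F` of vertices unforced. A forced vertex with exactly one
neighbour in `F` could force it, so all these vertices are leaks, and `F` is an `ℓ`-leaky fort made
of vertices of degree `> ℓ`. In a connected graph with `|E| ≤ |V|` every nonempty vertex set spans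
at most as many edges as it has vertices; double counting the edges leaving `F` then gives
`∑_{u ∈ F} deg u ≤ 2|F| + b`, where `b` counts outside vertices with a single neighbour in `F`.
Hence `b ≥ (ℓ - 1)|F| ≥ 2ℓ - 2 > ℓ` once `|F| ≥ 2`, while for `F = {u}` all
`deg u > ℓ` neighbours of `u` count, contradicting `|L| ≤ ℓ`.
-/

namespace SimpleGraph

open Finset

variable {V : Type*} (G : SimpleGraph V) [DecidableRel G.Adj]

theorem card_interedges_eq_sum (s t : Finset V) :
    #(G.interedges s t) = ∑ x ∈ s, #{y ∈ t | G.Adj x y} := by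
  rw [interedges_def, card_filter, sum_product]
  simp only [card_filter]

theorem card_interedges_comm (s t : Finset V) :
    #(G.interedges s t) = #(G.interedges t s) :=
  haveI : Std.Symm G.Adj := ⟨fun _ _ h ↦ h.symm⟩
  Rel.card_interedges_comm s t

theorem card_interedges_singleton_left (x : V) (t : Finset V) :
    #(G.interedges {x} t) = #{y ∈ t | G.Adj x y} := by
  rw [card_interedges_eq_sum, sum_singleton]

theorem card_interedges_univ_right [Fintype V] (s : Finset V) :
    #(G.interedges s univ) = ∑ x ∈ s, G.degree x := by
  simp only [card_interedges_eq_sum, ← neighborFinset_eq_filter, card_neighborFinset_eq_degree]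

theorem Connected.exists_adj_of_nonempty_of_ne_univ [Fintype V] {G : SimpleGraph V}
    (hG : G.Connected) {A : Finset V} (hA : A.Nonempty) (hA' : A ≠ univ) :
    ∃ a ∈ A, ∃ w ∉ A, G.Adj a w := by
  obtain ⟨a, ha⟩ := hA
  obtain ⟨w, hw⟩ := not_forall.1 (mt eq_univ_iff_forall.2 hA')
  obtain ⟨d, -, hd, hd'⟩ := (hG a w).some.exists_boundary_dart (A : Set V) ha hw
  exact ⟨d.fst, hd, d.snd, hd', d.adj⟩

variable [DecidableEq V]

theorem card_interedges_union_left {s₁ s₂ : Finset V} (h : Disjoint s₁ s₂) (t : Finset V) :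
    #(G.interedges (s₁ ∪ s₂) t) = #(G.interedges s₁ t) + #(G.interedges s₂ t) := by
  simp only [card_interedges_eq_sum, sum_union h]

theorem card_interedges_union_right (s : Finset V) {t₁ t₂ : Finset V} (h : Disjoint t₁ t₂) :
    #(G.interedges s (t₁ ∪ t₂)) = #(G.interedges s t₁) + #(G.interedges s t₂) := by
  simp only [card_interedges_comm G s, card_interedges_union_left G h]

theorem card_interedges_insert_self {w : V} {A : Finset V} (hw : w ∉ A) :
    #(G.interedges (insert w A) (insert w A)) =
      #(G.interedges A A) + 2 * #{y ∈ A | G.Adj w y} := by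
  have hdisj : Disjoint {w} A := disjoint_singleton_left.2 hw
  rw [insert_eq, card_interedges_union_left G hdisj, card_interedges_union_right G _ hdisj,
    card_interedges_union_right G _ hdisj, card_interedges_comm G A {w},
    card_interedges_singleton_left, card_interedges_singleton_left]
  simp only [filter_singleton, G.loopless.irrefl, if_false, card_empty]
  ring

variable [Fintype V]

/-- `#(G.interedges A A)` counts each edge spanned by `A` twice. -/
theorem card_interedges_self_le (hG : G.Connected) (hE : #G.edgeFinset ≤ Fintype.card V)
    {A : Finset V} (hA : A.Nonempty) : #(G.interedges A A) ≤ 2 * #A := by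
  revert hA
  refine strongDownwardInductionOn A (fun A ih _ hA ↦ ?_) (card_le_univ A)
  by_cases hAu : A = univ
  · subst hAu
    rw [card_interedges_univ_right, sum_degrees_eq_twice_card_edges, card_univ]
    omega
  obtain ⟨a, ha, w, hw, haw⟩ := hG.exists_adj_of_nonempty_of_ne_univ hA hAu
  have hins := ih (card_le_univ _) (ssubset_insert hw) (insert_nonempty w A)
  have hwA : 1 ≤ #{y ∈ A | G.Adj w y} := card_pos.2 ⟨a, mem_filter.2 ⟨ha, haw.symm⟩⟩
  rw [card_interedges_insert_self G hw, card_insert_of_notMem hw] at hins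
  omega

/-- The vertices `M` outside `F` with at least two neighbours in `F` are absorbed by applying
`card_interedges_self_le` to `F ∪ M`. -/
theorem sum_degree_le (hG : G.Connected) (hE : #G.edgeFinset ≤ Fintype.card V)
    {F : Finset V} (hF : F.Nonempty) :
    ∑ u ∈ F, G.degree u ≤ 2 * #F + #{v ∈ Fᶜ | #{u ∈ F | G.Adj v u} = 1} := by
  set M := {v ∈ Fᶜ | 2 ≤ #{u ∈ F | G.Adj v u}}
  have hFM : Disjoint F M := disjoint_compl_right.mono_right (filter_subset _ _)
  have hM : 2 * #M ≤ #(G.interedges M F) := by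
    rw [card_interedges_eq_sum, card_eq_sum_ones, mul_sum]
    exact sum_le_sum fun v hv ↦ by simpa using (mem_filter.1 hv).2
  have hspan := G.card_interedges_self_le hG hE (hF.mono (subset_union_left (s₂ := M)))
  rw [card_interedges_union_left G hFM, card_interedges_union_right G _ hFM,
    card_interedges_union_right G _ hFM, card_interedges_comm G F M,
    card_union_of_disjoint hFM] at hspan
  have houter : #(G.interedges Fᶜ F) = #{v ∈ Fᶜ | #{u ∈ F | G.Adj v u} = 1} +
      #(G.interedges M F) := by
    rw [card_interedges_eq_sum, card_interedges_eq_sum, card_filter, sum_filter,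
      ← sum_add_distrib]
    exact sum_congr rfl fun v _ ↦ by split_ifs <;> omega
  calc ∑ u ∈ F, G.degree u = #(G.interedges univ F) := by
        rw [← card_interedges_univ_right, card_interedges_comm]
    _ = #(G.interedges F F) + #(G.interedges Fᶜ F) := by
        rw [← card_interedges_union_left G disjoint_compl_right, union_compl]
    _ ≤ 2 * #F + #{v ∈ Fᶜ | #{u ∈ F | G.Adj v u} = 1} := by omega

theorem lt_card_filter_card_adj_eq_one (hG : G.Connected)
    (hE : #G.edgeFinset ≤ Fintype.card V) {ℓ : ℕ} (hℓ : 3 ≤ ℓ) {F : Finset V}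
    (hF : F.Nonempty) (hdeg : ∀ u ∈ F, ℓ < G.degree u) :
    ℓ < #{v ∈ Fᶜ | #{u ∈ F | G.Adj v u} = 1} := by
  obtain ⟨u, rfl⟩ | hF2 : (∃ u, F = {u}) ∨ 2 ≤ #F := by
    rcases Nat.lt_or_ge #F 2 with h | h
    · exact .inl (card_eq_one.1 (by have := hF.card_pos; omega))
    · exact .inr h
  · calc ℓ < G.degree u := hdeg u (mem_singleton_self u)
      _ = #(G.neighborFinset u) := (card_neighborFinset_eq_degree G u).symm
      _ ≤ _ := card_le_card fun v hv ↦ by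
        have huv := (G.mem_neighborFinset u v).1 hv
        simp [huv.ne', filter_singleton, huv.symm]
  · have hsum := G.sum_degree_le hG hE hF
    have hlow : ∑ u ∈ F, (ℓ + 1) ≤ ∑ u ∈ F, G.degree u := sum_le_sum hdeg
    rw [sum_const, smul_eq_mul] at hlow
    nlinarith

end SimpleGraph

namespace LF

open Finset

variable {V : Type*} {G : SimpleGraph V} {ℓ : ℕ}

theorem mem_of_isLeakyForcingSet_of_degree_le {S : Set V} {v : V} [Fintype (G.neighborSet v)]
    (hS : IsLeakyForcingSet G ℓ S) (hv : G.degree v ≤ ℓ) : v ∈ S := by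
  have hN : (G.neighborSet v).ncard ≤ ℓ := by
    rwa [Set.ncard_eq_toFinset_card', ← G.neighborFinset_def, card_neighborFinset_eq_degree]
  cases hS _ hN v with
  | init _ hvS => exact hvS
  | force b _ _ hbL hbv => exact absurd hbv.symm hbL

theorem isLeakyFort_setOf_not_forced [Finite V] {L S : Set V} (hL : L.ncard ≤ ℓ)
    (hne : ∃ v, ¬ Forced G L S v) : IsLeakyFort G ℓ {v | ¬ Forced G L S v} := by
  refine ⟨hne, le_trans (Set.ncard_le_ncard ?_ L.toFinite) hL⟩
  rintro w ⟨hw, u, ⟨hu, hwu⟩, huniq⟩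
  by_contra hwL
  refine hu (.force w u (not_not.1 hw) hwL hwu fun x hwx hxu ↦ ?_)
  by_contra hx
  exact hxu (huniq x ⟨hx, hwx⟩)

theorem exists_degree_le_of_isLeakyFort [Fintype V] [DecidableRel G.Adj]
    (hG : G.Connected) (hE : #G.edgeFinset ≤ Fintype.card V) (hℓ : 3 ≤ ℓ) {F : Set V}
    (hF : IsLeakyFort G ℓ F) : ∃ v ∈ F, G.degree v ≤ ℓ := by
  classical
  obtain ⟨hne, hcard⟩ := hF
  by_contra! hdeg
  have hlt := G.lt_card_filter_card_adj_eq_one hG hE hℓ (F := F.toFinset) (by simpa)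
    (by simpa using hdeg)
  have hset : {v | v ∉ F ∧ ∃! u, u ∈ F ∧ G.Adj v u} =
      ↑{v ∈ F.toFinsetᶜ | #{u ∈ F.toFinset | G.Adj v u} = 1} := by
    ext v
    simp [card_eq_one_iff_existsUnique]
  rw [hset, Set.ncard_coe_finset] at hcard
  omega

theorem isLeakyForcingSet_of_forall_degree_le [Fintype V] [DecidableRel G.Adj]
    (hG : G.Connected) (hE : #G.edgeFinset ≤ Fintype.card V) (hℓ : 3 ≤ ℓ) {S : Set V}
    (hS : ∀ v, G.degree v ≤ ℓ → v ∈ S) : IsLeakyForcingSet G ℓ S := by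
  intro L hL v
  by_contra hv
  obtain ⟨u, hu, hdeg⟩ :=
    exists_degree_le_of_isLeakyFort hG hE hℓ (isLeakyFort_setOf_not_forced hL ⟨v, hv⟩)
  exact hu (.init u (hS u hdeg))

end LF

theorem stmt8_general {V : Type*} [Fintype V] (G : SimpleGraph V) [DecidableRel G.Adj]
    (hconn : G.Connected) (huni : G.edgeFinset.card = Fintype.card V)
    (ℓ : ℕ) (hℓ : 3 ≤ ℓ) :
    LF.leakyForcingNumber G ℓ =
      (Finset.univ.filter fun v => G.degree v ≤ ℓ).card := by
  set T := Finset.univ.filter fun v => G.degree v ≤ ℓ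
  have hT : LF.IsLeakyForcingSet G ℓ ↑T :=
    LF.isLeakyForcingSet_of_forall_degree_le hconn huni.le hℓ fun v hv ↦ by simpa [T] using hv
  refine le_antisymm (Nat.sInf_le ⟨T, rfl, hT⟩) (le_csInf ⟨_, T, rfl, hT⟩ ?_)
  rintro _ ⟨S, rfl, hS⟩
  exact Finset.card_le_card fun v hv ↦
    LF.mem_of_isLeakyForcingSet_of_degree_le hS (Finset.mem_filter.1 hv).2

theorem stmt8 {V : Type*} [Fintype V] [DecidableEq V] (G : SimpleGraph V) [DecidableRel G.Adj]
    (hconn : G.Connected) (huni : G.edgeFinset.card = Fintype.card V)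
    (ℓ : ℕ) (hℓ : 3 ≤ ℓ) :
    LF.leakyForcingNumber G ℓ =
      (Finset.univ.filter fun v => G.degree v ≤ ℓ).card :=
  stmt8_general G hconn huni ℓ hℓ
end

section
/- In the generalized Petersen graph P(n,k) with n ≥ 2k and k ≥ 1, the set S = {x_1, x_2, …, x_{2k}, y_k, y_{k+1}} is a zero forcing set. -/
open SimpleGraph

/-! Using the 0-based indices of `petersen`: the seed contains `x_0, …, x_{2k-1}` and
`y_{k-1}, y_k`. Going down the outer cycle, `y_{j+1}` forces `y_j` for `j < k - 1`, its other
neighbours `x_{j+1}` and `y_{j+2}` being blue already. Then a strong induction on the index colours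
everything else: `x_{m+k}` forces `x_{m+2k}` once `x_m` and `y_{m+k}` are blue, and `y_{m+1}`
forces `y_{m+2}` once `y_m` and `x_{m+1}` are blue. -/

namespace LF

open Sum

variable {V : Type*} {n k m : ℕ}

theorem mod_cases_of_lt_two_mul {a : ℕ} (h : a < 2 * n) :
    a < n ∧ a % n = a ∨ n ≤ a ∧ a % n = a - n := by
  rcases lt_or_ge a n with ha | ha
  · exact Or.inl ⟨ha, Nat.mod_eq_of_lt ha⟩
  · exact Or.inr ⟨ha, by rw [Nat.mod_eq_sub_mod ha, Nat.mod_eq_of_lt (by omega)]⟩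

@[simp]
theorem petersen_adj_inl_inl {i j : Fin n} :
    (petersen n k).Adj (inl i) (inl j) ↔
      i ≠ j ∧ ((i.val + k) % n = j.val ∨ (j.val + k) % n = i.val) := by
  simp [petersen]

@[simp]
theorem petersen_adj_inr_inr {i j : Fin n} :
    (petersen n k).Adj (inr i) (inr j) ↔
      i ≠ j ∧ ((i.val + 1) % n = j.val ∨ (j.val + 1) % n = i.val) := by
  simp [petersen]

@[simp]
theorem petersen_adj_inl_inr {i j : Fin n} : (petersen n k).Adj (inl i) (inr j) ↔ i = j := by
  simp [petersen]

@[simp]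
theorem petersen_adj_inr_inl {i j : Fin n} : (petersen n k).Adj (inr i) (inl j) ↔ i = j := by
  simp [petersen, eq_comm]

theorem eq_of_petersen_adj_inl (h : m + 2 * k < n) {u : Fin n ⊕ Fin n}
    (hu : (petersen n k).Adj (inl ⟨m + k, by omega⟩) u) :
    u = inr ⟨m + k, by omega⟩ ∨ u = inl ⟨m, by omega⟩ ∨ u = inl ⟨m + 2 * k, h⟩ := by
  rcases u with ⟨j, hj⟩ | ⟨j, hj⟩
  · simp only [petersen_adj_inl_inl, ne_eq, Fin.mk.injEq] at hu
    simp only [reduceCtorEq, inl.injEq, Fin.mk.injEq, false_or]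
    rcases mod_cases_of_lt_two_mul (a := j + k) (n := n) (by omega) with ⟨_, h'⟩ | ⟨_, h'⟩ <;>
      rw [Nat.mod_eq_of_lt (by omega : m + k + k < n)] at hu <;> omega
  · simp_all

theorem eq_of_petersen_adj_inr (h : m + 2 < n) {u : Fin n ⊕ Fin n}
    (hu : (petersen n k).Adj (inr ⟨m + 1, by omega⟩) u) :
    u = inl ⟨m + 1, by omega⟩ ∨ u = inr ⟨m, by omega⟩ ∨ u = inr ⟨m + 2, h⟩ := by
  rcases u with ⟨j, hj⟩ | ⟨j, hj⟩
  · simp_all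
  · simp only [petersen_adj_inr_inr, ne_eq, Fin.mk.injEq] at hu
    simp only [reduceCtorEq, inr.injEq, Fin.mk.injEq, false_or]
    rcases mod_cases_of_lt_two_mul (a := j + 1) (n := n) (by omega) with ⟨_, h'⟩ | ⟨_, h'⟩ <;>
      rw [Nat.mod_eq_of_lt (by omega : m + 1 + 1 < n)] at hu <;> omega

theorem Forced.of_adj_of_neighbors {G : SimpleGraph V} {S : Set V} {b p q w : V}
    (hb : Forced G ∅ S b) (hbw : G.Adj b w) (hnbr : ∀ u, G.Adj b u → u = p ∨ u = q ∨ u = w)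
    (hp : Forced G ∅ S p) (hq : Forced G ∅ S q) : Forced G ∅ S w := by
  refine .force b w hb (Set.notMem_empty b) hbw fun u hu huw => ?_
  rcases hnbr u hu with rfl | rfl | rfl
  exacts [hp, hq, absurd rfl huw]

/-- Indexing by `ℕ`, with the bound `m < n` as a hypothesis, lets the inductions run over `ℕ`
without transporting `Fin` proofs. -/
def ForcedAt (G : SimpleGraph V) (S : Set V) (f : Fin n → V) (m : ℕ) : Prop :=
  ∀ h : m < n, Forced G ∅ S (f ⟨m, h⟩)

section Forcing

variable {S : Set (Fin n ⊕ Fin n)}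

theorem forcedAt_inl_add_two_mul (hk : 1 ≤ k) (h₀ : ForcedAt (petersen n k) S inl m)
    (h₁ : ForcedAt (petersen n k) S inl (m + k)) (h₁' : ForcedAt (petersen n k) S inr (m + k)) :
    ForcedAt (petersen n k) S inl (m + 2 * k) := fun h =>
  (h₁ (by omega)).of_adj_of_neighbors
    (by simp only [petersen_adj_inl_inl, ne_eq, Fin.mk.injEq]
        exact ⟨by omega, .inl (by rw [Nat.mod_eq_of_lt] <;> omega)⟩)
    (fun _ hu => eq_of_petersen_adj_inl h hu) (h₁' _) (h₀ _)

theorem forcedAt_inr_add_two (h₀ : ForcedAt (petersen n k) S inr m)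
    (h₁ : ForcedAt (petersen n k) S inr (m + 1)) (h₁' : ForcedAt (petersen n k) S inl (m + 1)) :
    ForcedAt (petersen n k) S inr (m + 2) := fun h =>
  (h₁ (by omega)).of_adj_of_neighbors
    (by simp only [petersen_adj_inr_inr, ne_eq, Fin.mk.injEq]
        exact ⟨by omega, .inl (Nat.mod_eq_of_lt h)⟩)
    (fun _ hu => eq_of_petersen_adj_inr h hu) (h₁' _) (h₀ _)

theorem forcedAt_inr_of_add_two (h : m + 2 < n) (h₁ : ForcedAt (petersen n k) S inr (m + 1))
    (h₂ : ForcedAt (petersen n k) S inr (m + 2)) (h₁' : ForcedAt (petersen n k) S inl (m + 1)) :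
    ForcedAt (petersen n k) S inr m := fun _ =>
  (h₁ (by omega)).of_adj_of_neighbors
    (by simp only [petersen_adj_inr_inr, ne_eq, Fin.mk.injEq]
        exact ⟨by omega, .inr (Nat.mod_eq_of_lt (by omega))⟩)
    (fun _ hu => (eq_of_petersen_adj_inr h hu).imp_right Or.symm) (h₁' _) (h₂ h)

variable (hk : 1 ≤ k) (hkn : k < n) (hx : ∀ m < 2 * k, ForcedAt (petersen n k) S inl m)
  (hy : ForcedAt (petersen n k) S inr (k - 1)) (hy' : ForcedAt (petersen n k) S inr k)
include hk hkn hx hy hy'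

theorem forcedAt_inr_of_le : ∀ m ≤ k, ForcedAt (petersen n k) S inr m := by
  have hpair : ∀ m ≤ k - 1,
      ForcedAt (petersen n k) S inr m ∧ ForcedAt (petersen n k) S inr (m + 1) := by
    refine fun m => Nat.decreasingInduction (fun j hj ih => ⟨?_, ih.1⟩) ⟨hy, ?_⟩
    · exact forcedAt_inr_of_add_two (by omega) ih.1 ih.2 (hx _ (by omega))
    · rwa [Nat.sub_add_cancel hk]
  intro m hm
  rcases hm.eq_or_lt with rfl | hm
  exacts [hy', (hpair m (by omega)).1]

theorem forced_petersen (v : Fin n ⊕ Fin n) : Forced (petersen n k) ∅ S v := by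
  have hforcedAt : ∀ i, ForcedAt (petersen n k) S inl i ∧ ForcedAt (petersen n k) S inr i := by
    intro i
    induction i using Nat.strong_induction_on with
    | _ i ih =>
      refine ⟨?_, ?_⟩
      · by_cases hi : i < 2 * k
        · exact hx i hi
        obtain ⟨m, rfl⟩ : ∃ m, i = m + 2 * k := ⟨i - 2 * k, by omega⟩
        exact forcedAt_inl_add_two_mul hk (ih m (by omega)).1 (ih (m + k) (by omega)).1
          (ih (m + k) (by omega)).2
      · by_cases hi : i ≤ k
        · exact forcedAt_inr_of_le hk hkn hx hy hy' i hi
        obtain ⟨m, rfl⟩ : ∃ m, i = m + 2 := ⟨i - 2, by omega⟩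
        exact forcedAt_inr_add_two (ih m (by omega)).2 (ih (m + 1) (by omega)).2
          (ih (m + 1) (by omega)).1
  rcases v with ⟨i, hi⟩ | ⟨i, hi⟩
  exacts [(hforcedAt i).1 hi, (hforcedAt i).2 hi]

end Forcing

end LF

theorem stmt10 (n k : ℕ) (hk : 1 ≤ k) (hn2k : 2 * k ≤ n) :
    LF.IsLeakyForcingSet (LF.petersen n k) 0
      ({v | ∃ j : Fin n, v = Sum.inl j ∧ j.val < 2 * k} ∪
        {Sum.inr ⟨k - 1, by omega⟩, Sum.inr ⟨k, by omega⟩}) := by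
  intro L hL
  obtain rfl : L = ∅ := (Set.ncard_eq_zero L.toFinite).1 (Nat.le_zero.mp hL)
  exact LF.forced_petersen hk (by omega) (fun m hm _ => .init _ (.inl ⟨_, rfl, hm⟩))
    (fun _ => .init _ (.inr (.inl rfl))) (fun _ => .init _ (.inr (.inr rfl)))
end

section
/- For any graph G, any edge e of G, and any ℓ ≥ 0, the ℓ-leaky forcing numbers satisfy −2 ≤ Z_{(ℓ)}(G) − Z_{(ℓ)}(G − e) ≤ 2. -/
open SimpleGraph

/-! Adding or deleting edges inside a vertex set `T` changes `Z_{(ℓ)}` by at most `|T|`: colour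
`T` blue in advance. A force `c → w` of the old graph with `w ∉ T` stays valid in the new one,
because the only edges it looks at, `cw` and `cu` for the other neighbours `u ∉ T` of `c`, have an
endpoint outside `T` and are therefore unchanged. For an edge `ab` take `T = {a, b}`. -/

namespace LF

variable {V : Type*} {G G' : SimpleGraph V} {T : Set V}

theorem Forced.union_of_adj_iff (hGG' : ∀ x y, y ∉ T → (G.Adj x y ↔ G'.Adj x y))
    {L S : Set V} {v : V} (hv : Forced G L S v) : Forced G' L (T ∪ S) v := by
  induction hv with
  | init w hw => exact .init w (Or.inr hw)
  | force c w _ hcL hcw _ ihc ihall =>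
    by_cases hwT : w ∈ T
    · exact .init w (Or.inl hwT)
    refine .force c w ihc hcL ((hGG' c w hwT).mp hcw) fun u hcu huw => ?_
    by_cases huT : u ∈ T
    · exact .init u (Or.inl huT)
    · exact ihall u ((hGG' c u huT).mpr hcu) huw

theorem IsLeakyForcingSet.union_of_adj_iff (hGG' : ∀ x y, y ∉ T → (G.Adj x y ↔ G'.Adj x y))
    {ℓ : ℕ} {S : Set V} (hS : IsLeakyForcingSet G ℓ S) : IsLeakyForcingSet G' ℓ (T ∪ S) :=
  fun L hL v => (hS L hL v).union_of_adj_iff hGG'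

variable [Fintype V]

theorem leakyForcingNumber_le_card {ℓ : ℕ} {S : Finset V} (hS : IsLeakyForcingSet G ℓ ↑S) :
    leakyForcingNumber G ℓ ≤ S.card :=
  Nat.sInf_le ⟨S, rfl, hS⟩

theorem exists_isLeakyForcingSet_card_eq_leakyForcingNumber (G : SimpleGraph V) (ℓ : ℕ) :
    ∃ S : Finset V, S.card = leakyForcingNumber G ℓ ∧ IsLeakyForcingSet G ℓ ↑S :=
  Nat.sInf_mem (s := {k | ∃ S : Finset V, S.card = k ∧ IsLeakyForcingSet G ℓ ↑S})
    ⟨_, Finset.univ, rfl, fun _ _ v => .init v (Finset.mem_coe.mpr (Finset.mem_univ v))⟩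

theorem leakyForcingNumber_le_add_card [DecidableEq V] (ℓ : ℕ) {T : Finset V}
    (hGG' : ∀ x y, y ∉ T → (G.Adj x y ↔ G'.Adj x y)) :
    leakyForcingNumber G' ℓ ≤ leakyForcingNumber G ℓ + T.card := by
  obtain ⟨S, hScard, hS⟩ := exists_isLeakyForcingSet_card_eq_leakyForcingNumber G ℓ
  have hTS : IsLeakyForcingSet G' ℓ ↑(T ∪ S) := by
    rw [Finset.coe_union]
    exact hS.union_of_adj_iff hGG'
  calc leakyForcingNumber G' ℓ ≤ (T ∪ S).card := leakyForcingNumber_le_card hTS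
    _ ≤ T.card + S.card := Finset.card_union_le T S
    _ = leakyForcingNumber G ℓ + T.card := by rw [hScard, add_comm]

end LF

theorem stmt14_general {V : Type*} [Fintype V] (G : SimpleGraph V) (ℓ : ℕ) (a b : V) :
    -2 ≤ (LF.leakyForcingNumber G ℓ : ℤ) -
        LF.leakyForcingNumber (G.deleteEdges {s(a, b)}) ℓ ∧
    (LF.leakyForcingNumber G ℓ : ℤ) -
        LF.leakyForcingNumber (G.deleteEdges {s(a, b)}) ℓ ≤ 2 := by
  classical
  have hGG' : ∀ x y, y ∉ ({a, b} : Finset V) →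
      (G.Adj x y ↔ (G.deleteEdges {s(a, b)}).Adj x y) := by
    intro x y hy
    simp only [Finset.mem_insert, Finset.mem_singleton, not_or] at hy
    simp [SimpleGraph.deleteEdges_adj, hy.1, hy.2]
  have hcard : ({a, b} : Finset V).card ≤ 2 := Finset.card_le_two
  have hdel := LF.leakyForcingNumber_le_add_card ℓ hGG'
  have hadd := LF.leakyForcingNumber_le_add_card ℓ fun x y hy => (hGG' x y hy).symm
  omega

theorem stmt14 {V : Type*} [Fintype V] (G : SimpleGraph V) (ℓ : ℕ) (a b : V)
    (hab : G.Adj a b) :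
    -2 ≤ (LF.leakyForcingNumber G ℓ : ℤ) -
        LF.leakyForcingNumber (G.deleteEdges {s(a, b)}) ℓ ∧
    (LF.leakyForcingNumber G ℓ : ℤ) -
        LF.leakyForcingNumber (G.deleteEdges {s(a, b)}) ℓ ≤ 2 :=
  stmt14_general G ℓ a b
end

section
/- Let G be a connected graph on n ≥ 2 vertices. Then the 1-leaky forcing number of G equals 2 if and only if G is a path graph or a cycle graph. -/
open SimpleGraph

namespace LFAux
open LF
variable {V : Type*} {W : Type*}

theorem forced_closure {G : SimpleGraph V} {L S T : Set V} (hST : S ⊆ T)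
    (hT : ∀ p ∈ T, p ∉ L → ∀ w, G.Adj p w → w ∉ T → ∃ x, G.Adj p x ∧ x ≠ w ∧ x ∉ T) :
    ∀ v, Forced G L S v → v ∈ T := by
  intro v hv
  induction hv with
  | init v hv => exact hST hv
  | force b w hb hbL hadj hall ihb ihall =>
    by_contra hw
    obtain ⟨x, hx1, hx2, hx3⟩ := hT b ihb hbL w hadj hw
    exact hx3 (ihall x hx1 hx2)

theorem forced_map {G : SimpleGraph V} {H : SimpleGraph W} (e : G ≃g H) {L S : Set V} {v : V}
    (h : Forced G L S v) : Forced H (e '' L) (e '' S) (e v) := by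
  induction h with
  | init v hv => exact Forced.init _ ⟨v, hv, rfl⟩
  | force b w hb hbL hadj hall ihb ihall =>
    refine Forced.force (e b) (e w) ihb ?_ (e.map_adj_iff.2 hadj) ?_
    · rintro ⟨x, hx, hxe⟩; exact hbL ((e.injective hxe) ▸ hx)
    · intro u hu hne
      have hEq : e (e.symm u) = u := e.apply_symm_apply u
      rw [← hEq] at hu hne ⊢
      have : G.Adj b (e.symm u) := e.map_adj_iff.1 hu
      exact ihall _ this (fun h => hne (by rw [h]))

theorem isLeakyForcingSet_map {G : SimpleGraph V} {H : SimpleGraph W} (e : G ≃g H) {ℓ : ℕ}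
    {S : Set V} (h : IsLeakyForcingSet G ℓ S) : IsLeakyForcingSet H ℓ (e '' S) := by
  intro L hL v
  have h1 : (e.symm '' L).ncard ≤ ℓ := by
    rwa [Set.ncard_image_of_injective _ e.symm.injective]
  have h2 := forced_map e (h (e.symm '' L) h1 (e.symm v))
  have hL' : e '' (e.symm '' L) = L := by
    rw [← Set.image_comp]; simp
  have hv : e (e.symm v) = v := e.apply_symm_apply v
  rwa [hL', hv] at h2

theorem leakyForcingNumber_congr [Fintype V] [Fintype W] {G : SimpleGraph V}
    {H : SimpleGraph W} (e : G ≃g H) (ℓ : ℕ) :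
    leakyForcingNumber G ℓ = leakyForcingNumber H ℓ := by
  classical
  unfold leakyForcingNumber
  congr 1
  ext k
  constructor
  · rintro ⟨S, rfl, hS⟩
    refine ⟨S.image e, ?_, ?_⟩
    · exact Finset.card_image_of_injective _ e.injective
    · have := isLeakyForcingSet_map e hS
      rwa [← Finset.coe_image] at this
  · rintro ⟨S, rfl, hS⟩
    refine ⟨S.image e.symm, ?_, ?_⟩
    · exact Finset.card_image_of_injective _ e.symm.injective
    · have := isLeakyForcingSet_map e.symm hS
      rwa [← Finset.coe_image] at this


theorem two_le_of_mem [Fintype V] {G : SimpleGraph V} (hn : 2 ≤ Fintype.card V)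
    {k : ℕ} (S : Finset V) (hcard : S.card = k) (hS : IsLeakyForcingSet G 1 ↑S) : 2 ≤ k := by
  classical
  by_contra h
  interval_cases k
  · -- empty
    have hSe : (S : Set V) = ∅ := by
      simp [Finset.card_eq_zero.1 hcard]
    have hcl : ∀ v, Forced G ∅ (↑S) v → v ∈ (∅ : Set V) :=
      forced_closure (by rw [hSe]) (by intro p hp; exact absurd hp (by simp))
    have hne : Nonempty V := Fintype.card_pos_iff.1 (by omega)
    obtain ⟨v⟩ := hne
    exact hcl v (hS ∅ (by simp) v)
  · obtain ⟨u, hu⟩ := Finset.card_eq_one.1 hcard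
    have hSu : (S : Set V) = {u} := by rw [hu]; simp
    have hclos : ∀ v, Forced G {u} (↑S) v → v ∈ ({u} : Set V) :=
      forced_closure (by rw [hSu]) (by
        intro p hp hpL
        exact absurd hp hpL)
    have hnt : Nontrivial V := Fintype.one_lt_card_iff_nontrivial.1 (by omega)
    obtain ⟨v, hv⟩ := exists_ne u
    have := hclos v (hS {u} (by simp) v)
    exact hv this

theorem pathGraph_adj {n : ℕ} {i j : Fin n} :
    (LF.pathGraph n).Adj i j ↔ i ≠ j ∧ (i.val + 1 = j.val ∨ j.val + 1 = i.val) := by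
  simp [LF.pathGraph, fromRel_adj]

theorem cycleGraph_adj {n : ℕ} {i j : Fin n} :
    (LF.cycleGraph n).Adj i j ↔ i ≠ j ∧ ((i.val + 1) % n = j.val ∨ (j.val + 1) % n = i.val) := by
  simp [LF.cycleGraph, fromRel_adj]

theorem subset_singleton_of_ncard_le_one {L : Set V} [Finite V] (c₀ : V) (h : L.ncard ≤ 1) :
    ∃ c, L ⊆ {c} := by
  rcases Set.eq_empty_or_nonempty L with rfl | ⟨x, hx⟩
  · exact ⟨c₀, by simp⟩
  · refine ⟨x, fun y hy => ?_⟩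
    have : L.ncard = 1 := le_antisymm h (by
      rw [Nat.one_le_iff_ne_zero]
      simp [Set.ncard_eq_zero (Set.toFinite L)]
      exact Set.nonempty_iff_ne_empty.1 ⟨x, hx⟩)
    obtain ⟨a, ha⟩ := Set.ncard_eq_one.1 this
    rw [ha] at hx hy
    simp only [Set.mem_singleton_iff] at hx hy
    rw [hx, hy]
    rfl



theorem path_forced {n : ℕ} (hn : 2 ≤ n) {L : Set (Fin n)} (hL : L.ncard ≤ 1) :
    ∀ v, Forced (LF.pathGraph n) L {⟨0, by omega⟩, ⟨n-1, by omega⟩} v := by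
  obtain ⟨c, hc⟩ := subset_singleton_of_ncard_le_one (⟨0, by omega⟩ : Fin n) hL
  set S : Set (Fin n) := {⟨0, by omega⟩, ⟨n-1, by omega⟩} with hSdef
  have hup : ∀ j, ∀ (h : j < n), j ≤ c.val → Forced (LF.pathGraph n) L S ⟨j, h⟩ := by
    intro j
    induction j using Nat.strong_induction_on with
    | _ j IH =>
      intro h hjc
      match j with
      | 0 => exact Forced.init _ (Or.inl rfl)
      | (k+1) =>
        refine Forced.force (⟨k, by omega⟩ : Fin n) (⟨k+1, h⟩ : Fin n) (IH k (by omega) (by omega) (by omega)) ?_ ?_ ?_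
        · intro hmem
          have := hc hmem
          simp only [Set.mem_singleton_iff] at this
          have hk : k = c.val := congrArg Fin.val this
          omega
        · rw [pathGraph_adj]
          exact ⟨by simp [Fin.ext_iff], Or.inl rfl⟩
        · intro x hadj hne
          rw [pathGraph_adj] at hadj
          obtain ⟨hne', hor⟩ := hadj
          rcases hor with h1 | h1
          · exact absurd (Fin.ext (by simp only [Fin.val_mk] at h1 ⊢; omega)) hne
          · have hx : x = ⟨k-1, by omega⟩ := Fin.ext (by simp only [Fin.val_mk] at h1 ⊢; omega)
            rw [hx]
            exact IH (k-1) (by omega) (by omega) (by omega)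
  have hdown : ∀ d, d < n → c.val ≤ n-1-d → Forced (LF.pathGraph n) L S ⟨n-1-d, by omega⟩ := by
    intro d
    induction d using Nat.strong_induction_on with
    | _ d IH =>
      intro hd hcd
      match d with
      | 0 => exact Forced.init _ (Or.inr rfl)
      | (e+1) =>
        refine Forced.force (⟨n-1-e, by omega⟩ : Fin n) (⟨n-1-(e+1), by omega⟩ : Fin n)
          (IH e (by omega) (by omega) (by omega)) ?_ ?_ ?_
        · intro hmem
          have := hc hmem
          simp only [Set.mem_singleton_iff] at this
          have hk : n-1-e = c.val := congrArg Fin.val this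
          omega
        · rw [pathGraph_adj]
          refine ⟨by simp only [ne_eq, Fin.mk.injEq]; omega, Or.inr (by simp only [Fin.val_mk]; omega)⟩
        · intro x hadj hne
          rw [pathGraph_adj] at hadj
          obtain ⟨hne', hor⟩ := hadj
          rcases hor with h1 | h1
          · -- x.val = n-1-e+1 = n-1-(e-1), need e ≥ 1
            simp only [Fin.val_mk] at h1
            have hxval : x.val = n-e := by omega
            have he : 1 ≤ e := by
              by_contra h0
              have : x.val < n := x.isLt
              omega
            have hx : x = ⟨n-1-(e-1), by omega⟩ := Fin.ext (by simp only [Fin.val_mk]; omega)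
            rw [hx]
            exact IH (e-1) (by omega) (by omega) (by omega)
          · exact absurd (Fin.ext (by simp only [Fin.val_mk] at h1 ⊢; omega)) hne
  intro v
  obtain ⟨j, hj⟩ := v
  by_cases hjc : j ≤ c.val
  · exact hup j hj hjc
  · have h1 : (⟨j, hj⟩ : Fin n) = ⟨n-1-(n-1-j), by omega⟩ := Fin.ext (by simp only [Fin.val_mk]; omega)
    rw [h1]
    exact hdown (n-1-j) (by omega) (by omega)


theorem number_eq_two_of (G : SimpleGraph V) [Fintype V] (hn : 2 ≤ Fintype.card V)
    (S : Finset V) (hcard : S.card = 2) (hS : IsLeakyForcingSet G 1 ↑S) :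
    leakyForcingNumber G 1 = 2 := by
  have hmem : 2 ∈ {k | ∃ S : Finset V, S.card = k ∧ IsLeakyForcingSet G 1 ↑S} := ⟨S, hcard, hS⟩
  refine le_antisymm (Nat.sInf_le hmem) ?_
  have hne : {k | ∃ S : Finset V, S.card = k ∧ IsLeakyForcingSet G 1 ↑S}.Nonempty := ⟨2, hmem⟩
  obtain ⟨S', hS'card, hS'⟩ := Nat.sInf_mem hne
  exact two_le_of_mem hn S' hS'card hS'

theorem pathGraph_number {n : ℕ} (hn : 2 ≤ n) : leakyForcingNumber (LF.pathGraph n) 1 = 2 := by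
  classical
  refine number_eq_two_of _ (by simp; omega) {⟨0, by omega⟩, ⟨n-1, by omega⟩} ?_ ?_
  · rw [Finset.card_insert_of_notMem (by simp [Fin.ext_iff]; omega), Finset.card_singleton]
  · intro L hL v
    have : (↑({⟨0, by omega⟩, ⟨n-1, by omega⟩} : Finset (Fin n)) : Set (Fin n))
        = {⟨0, by omega⟩, ⟨n-1, by omega⟩} := by simp
    rw [this]
    exact path_forced hn hL v


theorem cycle_forced {n : ℕ} (hn : 2 ≤ n) {L : Set (Fin n)} (hL : L.ncard ≤ 1) :
    ∀ v, Forced (LF.cycleGraph n) L {⟨0, by omega⟩, ⟨1, by omega⟩} v := by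
  rcases Nat.lt_or_ge n 3 with hn2 | hn3
  · -- n = 2
    intro v
    obtain ⟨j, hj⟩ := v
    have hj2 : j < 2 := by omega
    interval_cases j
    · exact Forced.init _ (Or.inl rfl)
    · exact Forced.init _ (Or.inr rfl)
  obtain ⟨c, hc⟩ := subset_singleton_of_ncard_le_one (⟨0, by omega⟩ : Fin n) hL
  set S : Set (Fin n) := {⟨0, by omega⟩, ⟨1, by omega⟩} with hSdef
  set c' : ℕ := if c.val = 0 then n-1 else c.val with hc'def
  have hc'1 : 1 ≤ c' := by
    rw [hc'def]; split <;> omega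
  have hc'n : c' ≤ n-1 := by
    have := c.isLt
    rw [hc'def]; split <;> omega
  have hnotin : ∀ j, 1 ≤ j → j < c' → ∀ (h : j < n), (⟨j, h⟩ : Fin n) ∉ L := by
    intro j h1 h2 h hmem
    have heq : j = c.val := congrArg Fin.val (hc hmem)
    rw [hc'def] at h2
    by_cases h0 : c.val = 0 <;> simp [h0] at h2 <;> omega
  have hup : ∀ j, ∀ (h : j < n), 1 ≤ j → j ≤ c' → Forced (LF.cycleGraph n) L S ⟨j, h⟩ := by
    intro j
    induction j using Nat.strong_induction_on with
    | _ j IH =>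
      intro h h1 hjc
      match j, h1 with
      | 1, _ => exact Forced.init _ (Or.inr rfl)
      | (k+2), _ =>
        set k' := k + 1 with hk'
        refine Forced.force (⟨k', by omega⟩ : Fin n) (⟨k'+1, h⟩ : Fin n)
          (IH k' (by omega) (by omega) (by omega) (by omega))
          (hnotin k' (by omega) (by omega) (by omega)) ?_ ?_
        · rw [cycleGraph_adj]
          refine ⟨by simp [Fin.ext_iff], Or.inl ?_⟩
          simp only [Fin.val_mk]
          exact Nat.mod_eq_of_lt (by omega)
        · intro x hadj hne
          rw [cycleGraph_adj] at hadj
          obtain ⟨hne', hor⟩ := hadj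
          simp only [Fin.val_mk] at hor
          rcases hor with h2 | h2
          · rw [Nat.mod_eq_of_lt (by omega : k'+1 < n)] at h2
            exact absurd (Fin.ext (by simp only [Fin.val_mk]; omega)) hne
          · rcases Nat.lt_or_ge (x.val+1) n with h3 | h3
            · rw [Nat.mod_eq_of_lt h3] at h2
              -- x = k'-1 = k
              rcases Nat.eq_or_lt_of_le (show 1 ≤ k' by omega) with hk1 | hk1
              · -- k' = 1, x = 0
                have hx : x = ⟨0, by omega⟩ := Fin.ext (by simp only [Fin.val_mk]; omega)
                rw [hx]; exact Forced.init _ (Or.inl rfl)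
              · have hx : x = ⟨k'-1, by omega⟩ := Fin.ext (by simp only [Fin.val_mk]; omega)
                rw [hx]
                exact IH (k'-1) (by omega) (by omega) (by omega) (by omega)
            · have hx1 : x.val + 1 = n := by have := x.isLt; omega
              rw [hx1, Nat.mod_self] at h2
              omega
  have hdown : (1 ≤ c.val) → ∀ d, d ≤ n-1 → c.val ≤ n-1-d →
      Forced (LF.cycleGraph n) L S ⟨n-1-d, by omega⟩ := by
    intro hc1 d
    induction d using Nat.strong_induction_on with
    | _ d IH =>
      intro hd hcd
      cases d with
      | zero =>
        refine Forced.force ((⟨0, by omega⟩ : Fin n)) ((⟨n-1, by omega⟩ : Fin n)) (Forced.init _ (Or.inl rfl)) ?_ ?_ ?_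
        · intro hmem
          have := congrArg Fin.val (hc hmem)
          simp only [Fin.val_mk] at this
          omega
        · rw [cycleGraph_adj]
          refine ⟨by simp [Fin.ext_iff]; omega, Or.inr ?_⟩
          simp only [Fin.val_mk]
          rw [show n-1+1 = n by omega, Nat.mod_self]
        · intro x hadj hne
          rw [cycleGraph_adj] at hadj
          obtain ⟨hne', hor⟩ := hadj
          simp only [Fin.val_mk] at hor
          rcases hor with h2 | h2
          · rw [Nat.mod_eq_of_lt (by omega : 0+1 < n)] at h2
            have hx : x = ⟨1, by omega⟩ := Fin.ext (by simp only [Fin.val_mk]; omega)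
            rw [hx]; exact Forced.init _ (Or.inr rfl)
          · rcases Nat.lt_or_ge (x.val+1) n with h3 | h3
            · rw [Nat.mod_eq_of_lt h3] at h2; omega
            · have hx1 : x.val + 1 = n := by have := x.isLt; omega
              exact absurd (Fin.ext (by simp only [Fin.val_mk]; omega)) hne
      | succ e =>
        set j := n-1-(e+1) with hj
        refine Forced.force ((⟨j+1, by omega⟩ : Fin n)) ((⟨j, by omega⟩ : Fin n))
          (by
            have hj1 : j + 1 = n-1-e := by omega
            have := IH e (by omega) (by omega) (by omega)
            convert this using 2 <;> omega) ?_ ?_ ?_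
        · intro hmem
          have := congrArg Fin.val (hc hmem)
          simp only [Fin.val_mk] at this
          omega
        · rw [cycleGraph_adj]
          refine ⟨by simp [Fin.ext_iff]; try omega, Or.inr ?_⟩
          simp only [Fin.val_mk]
          exact Nat.mod_eq_of_lt (by omega)
        · intro x hadj hne
          rw [cycleGraph_adj] at hadj
          obtain ⟨hne', hor⟩ := hadj
          simp only [Fin.val_mk] at hor
          rcases hor with h2 | h2
          · -- x = j+2 or 0
            rcases Nat.lt_or_ge (j+1+1) n with h3 | h3
            · rw [Nat.mod_eq_of_lt h3] at h2
              have he1 : 1 ≤ e := by omega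
              have hx : x = ⟨n-1-(e-1), by omega⟩ :=
                Fin.ext (by simp only [Fin.val_mk]; omega)
              rw [hx]
              exact IH (e-1) (by omega) (by omega) (by omega)
            · have hj2 : j+1+1 = n := by omega
              rw [hj2, Nat.mod_self] at h2
              have hx : x = ⟨0, by omega⟩ := Fin.ext (by simp only [Fin.val_mk]; omega)
              rw [hx]; exact Forced.init _ (Or.inl rfl)
          · rcases Nat.lt_or_ge (x.val+1) n with h3 | h3
            · rw [Nat.mod_eq_of_lt h3] at h2
              exact absurd (Fin.ext (by simp only [Fin.val_mk]; omega)) hne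
            · have hx1 : x.val + 1 = n := by have := x.isLt; omega
              rw [hx1, Nat.mod_self] at h2
              omega
  intro v
  obtain ⟨j, hj⟩ := v
  rcases Nat.eq_zero_or_pos j with rfl | hj1
  · exact Forced.init _ (Or.inl rfl)
  by_cases hjc : j ≤ c'
  · exact hup j hj hj1 hjc
  · -- j > c', so c.val ≥ 1 (else c' = n-1 ≥ j) and j ≥ c.val
    have hc1 : 1 ≤ c.val := by
      by_contra h0
      rw [hc'def] at hjc
      simp [show c.val = 0 by omega] at hjc
      omega
    have hcj : c.val ≤ j := by
      rw [hc'def] at hjc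
      simp [show ¬ c.val = 0 by omega] at hjc
      omega
    have h1 : (⟨j, hj⟩ : Fin n) = ⟨n-1-(n-1-j), by omega⟩ :=
      Fin.ext (by simp only [Fin.val_mk]; omega)
    rw [h1]
    exact hdown hc1 (n-1-j) (by omega) (by omega)

theorem cycleGraph_number {n : ℕ} (hn : 2 ≤ n) : leakyForcingNumber (LF.cycleGraph n) 1 = 2 := by
  classical
  refine number_eq_two_of _ (by simp; omega) {⟨0, by omega⟩, ⟨1, by omega⟩} ?_ ?_
  · rw [Finset.card_insert_of_notMem (by simp [Fin.ext_iff]), Finset.card_singleton]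
  · intro L hL v
    have : (↑({⟨0, by omega⟩, ⟨1, by omega⟩} : Finset (Fin n)) : Set (Fin n))
        = {⟨0, by omega⟩, ⟨1, by omega⟩} := by simp
    rw [this]
    exact cycle_forced hn hL v


section Chain
variable {G : SimpleGraph V} {a b : V}

/-- A forcing chain for the leak-at-`a` process: `u 0 = b`, consecutive vertices adjacent,
and every non-final vertex has all neighbors inside the chain-so-far (or `a`). -/
def Chain (G : SimpleGraph V) (a b : V) (u : ℕ → V) (t : ℕ) : Prop :=
  u 0 = b ∧
  (∀ i, i < t → u i ≠ a) ∧
  (∀ i, i < t → ∀ j, j < t → u i = u j → i = j) ∧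
  (∀ i, i + 1 < t → G.Adj (u i) (u (i+1))) ∧
  (∀ i, i + 1 < t → ∀ x, G.Adj (u i) x → x = a ∨ ∃ j, j ≤ i+1 ∧ x = u j)

theorem not_stalled (hF : ∀ v, Forced G ({c} : Set V) ({a, b} : Set V) v)
    {B : Set V} (haB : a ∈ B) (hbB : b ∈ B) (hBne : B ≠ Set.univ) :
    ∃ p ∈ B, p ≠ c ∧ ∃ w, G.Adj p w ∧ w ∉ B ∧ ∀ x, G.Adj p x → x ≠ w → x ∈ B := by
  by_contra hcon
  push_neg at hcon
  have hstall : ∀ p ∈ B, p ∉ ({c} : Set V) → ∀ w, G.Adj p w → w ∉ B →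
      ∃ x, G.Adj p x ∧ x ≠ w ∧ x ∉ B := by
    intro p hp hpc w hw hwB
    obtain ⟨x, hx1, hx2, hx3⟩ := hcon p hp (by simpa using hpc) w hw hwB
    exact ⟨x, hx1, hx2, hx3⟩
  have hsub : ∀ v, Forced G ({c} : Set V) ({a, b} : Set V) v → v ∈ B :=
    forced_closure (by rintro v (rfl | rfl) <;> assumption) hstall
  obtain ⟨v₀, hv₀⟩ : ∃ v₀, v₀ ∉ B := by
    by_contra h
    push_neg at h
    exact hBne (Set.eq_univ_of_forall h)
  exact hv₀ (hsub v₀ (hF v₀))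

theorem chain_extend [DecidableEq V] (hF : ∀ v, Forced G ({a} : Set V) ({a, b} : Set V) v)
    {u : ℕ → V} {t : ℕ} (ht : 1 ≤ t) (hch : Chain G a b u t)
    (hne : insert a (u '' Set.Iio t) ≠ Set.univ) :
    ∃ u', (∀ i, i < t → u' i = u i) ∧ Chain G a b u' (t+1) := by
  obtain ⟨hC1, hC2, hC3, hC4, hC5⟩ := hch
  set B := insert a (u '' Set.Iio t) with hB
  have haB : a ∈ B := Set.mem_insert _ _
  have hbB : b ∈ B := by
    rw [← hC1]; exact Set.mem_insert_of_mem _ ⟨0, Set.mem_Iio.2 (by omega), rfl⟩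
  obtain ⟨p, hpB, hpa, w, hpw, hwB, hall⟩ := not_stalled hF haB hbB hne
  have hpu : ∃ i, i < t ∧ p = u i := by
    rcases hpB with rfl | ⟨i, hi, rfl⟩
    · exact absurd rfl hpa
    · exact ⟨i, by simpa using hi, rfl⟩
  obtain ⟨i, hit, rfl⟩ := hpu
  have hlast : i = t - 1 := by
    by_contra hne'
    have hi1 : i + 1 < t := by omega
    rcases hC5 i hi1 w hpw with rfl | ⟨j, hj1, rfl⟩
    · exact hwB haB
    · exact hwB (Set.mem_insert_of_mem _ ⟨j, by simp; omega, rfl⟩)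
  subst hlast
  refine ⟨Function.update u t w, fun i hi => Function.update_of_ne (by omega) _ _, ?_, ?_, ?_, ?_, ?_⟩
  · rw [Function.update_of_ne (by omega)]; exact hC1
  · intro i hi
    rcases Nat.lt_or_ge i t with h' | h'
    · rw [Function.update_of_ne (by omega)]; exact hC2 i h'
    · have : i = t := by omega
      subst this
      rw [Function.update_self]
      intro hwa; exact hwB (hwa ▸ haB)
  · intro i hi j hj hij
    rcases Nat.lt_or_ge i t with h1 | h1 <;> rcases Nat.lt_or_ge j t with h2 | h2
    · rw [Function.update_of_ne (by omega), Function.update_of_ne (by omega)] at hij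
      exact hC3 i h1 j h2 hij
    · have hj' : j = t := by omega
      subst hj'
      rw [Function.update_of_ne (by omega), Function.update_self] at hij
      exact (hwB (Set.mem_insert_of_mem _ ⟨i, by simp; omega, hij⟩)).elim
    · have hi' : i = t := by omega
      subst hi'
      rw [Function.update_self, Function.update_of_ne (by omega)] at hij
      exact (hwB (Set.mem_insert_of_mem _ ⟨j, by simp; omega, hij.symm⟩)).elim
    · omega
  · intro i hi
    rcases Nat.lt_or_ge (i+1) t with h1 | h1
    · rw [Function.update_of_ne (by omega), Function.update_of_ne (by omega)]
      exact hC4 i h1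
    · have : i + 1 = t := by omega
      rw [Function.update_of_ne (by omega), this, Function.update_self]
      have : i = t - 1 := by omega
      rw [this]
      exact hpw
  · intro i hi x hx
    rcases Nat.lt_or_ge (i+1) t with h1 | h1
    · rw [Function.update_of_ne (by omega)] at hx
      rcases hC5 i h1 x hx with rfl | ⟨j, hj1, rfl⟩
      · exact Or.inl rfl
      · exact Or.inr ⟨j, hj1, (Function.update_of_ne (by omega) _ _).symm⟩
    · have hit' : i + 1 = t := by omega
      rw [Function.update_of_ne (by omega)] at hx
      have hieq : i = t - 1 := by omega
      rw [hieq] at hx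
      rcases eq_or_ne x w with rfl | hxw
      · exact Or.inr ⟨t, by omega, by rw [Function.update_self]⟩
      · rcases hall x hx hxw with rfl | ⟨j, hj, rfl⟩
        · exact Or.inl rfl
        · refine Or.inr ⟨j, by simp at hj; omega, ?_⟩
          rw [Function.update_of_ne (by simp at hj; omega)]

theorem chain_card [Fintype V] {u : ℕ → V} {t : ℕ} (hch : Chain G a b u t) :
    (insert a (u '' Set.Iio t)).ncard = t + 1 := by
  obtain ⟨hC1, hC2, hC3, hC4, hC5⟩ := hch
  have h1 : (u '' Set.Iio t).ncard = t := by
    rw [Set.ncard_image_of_injOn (fun x hx y hy hxy =>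
      hC3 x (by simpa using hx) y (by simpa using hy) hxy)]
    rw [← Finset.coe_range, Set.ncard_coe_finset, Finset.card_range]
  rw [Set.ncard_insert_of_notMem ?_ (Set.Finite.image _ (Set.finite_Iio t)), h1]
  rintro ⟨i, hi, hia⟩
  exact hC2 i (by simpa using hi) hia

theorem chain_total [Fintype V] [DecidableEq V]
    (hF : ∀ v, Forced G ({a} : Set V) ({a, b} : Set V) v) (hab : a ≠ b) :
    ∃ t u, 1 ≤ t ∧ Chain G a b u t ∧ insert a (u '' Set.Iio t) = Set.univ ∧
      t + 1 = Fintype.card V := by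
  have key : ∀ k t u, 1 ≤ t → Chain G a b u t → Fintype.card V ≤ t + k →
      ∃ t' u', 1 ≤ t' ∧ Chain G a b u' t' ∧ insert a (u' '' Set.Iio t') = Set.univ := by
    intro k
    induction k with
    | zero =>
      intro t u ht hch hcard
      have h1 : (insert a (u '' Set.Iio t)).ncard = t + 1 := chain_card hch
      have h2 : (insert a (u '' Set.Iio t)).ncard ≤ (Set.univ : Set V).ncard :=
        Set.ncard_le_ncard (Set.subset_univ _) Set.finite_univ
      rw [Set.ncard_univ, Nat.card_eq_fintype_card] at h2
      omega
    | succ k IH =>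
      intro t u ht hch hcard
      by_cases hne : insert a (u '' Set.Iio t) = Set.univ
      · exact ⟨t, u, ht, hch, hne⟩
      · obtain ⟨u', _, hch'⟩ := chain_extend hF ht hch hne
        exact IH (t+1) u' (by omega) hch' (by omega)
  have hbase : Chain G a b (fun _ => b) 1 := by
    refine ⟨rfl, ?_, ?_, ?_, ?_⟩
    · intro i hi; exact fun h => hab h.symm
    · intro i hi j hj _; omega
    · intro i hi; omega
    · intro i hi; omega
  obtain ⟨t, u, ht, hch, hcov⟩ := key (Fintype.card V) 1 (fun _ => b) le_rfl hbase (by omega)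
  refine ⟨t, u, ht, hch, hcov, ?_⟩
  have := chain_card (G := G) (a := a) (b := b) hch
  rw [hcov, Set.ncard_univ, Nat.card_eq_fintype_card] at this
  omega

/-- Final structural fact: every neighbor of a chain vertex is `a` or an adjacent chain vertex. -/
theorem chain_nbrs [Fintype V] {u : ℕ → V} {t : ℕ} (hch : Chain G a b u t)
    (hcov : insert a (u '' Set.Iio t) = Set.univ) :
    ∀ i, i < t → ∀ x, G.Adj (u i) x →
      x = a ∨ (1 ≤ i ∧ x = u (i-1)) ∨ (i + 1 < t ∧ x = u (i+1)) := by
  obtain ⟨hC1, hC2, hC3, hC4, hC5⟩ := hch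
  intro i hi x hx
  have hxB : x ∈ insert a (u '' Set.Iio t) := by rw [hcov]; trivial
  rcases hxB with rfl | ⟨j, hj, rfl⟩
  · exact Or.inl rfl
  · simp only [Set.mem_Iio] at hj
    have hij : i ≠ j := by
      intro h; subst h; exact G.ne_of_adj hx rfl
    rcases Nat.lt_or_ge j i with hji | hji
    · -- j < i : use C5 at j on edge (u j, u i)
      have hj1 : j + 1 < t := by omega
      rcases hC5 j hj1 (u i) hx.symm with h' | ⟨j', hj', h'⟩
      · exact absurd h' (hC2 i hi)
      · have : i = j' := hC3 i hi j' (by omega) h'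
        have : j = i - 1 := by omega
        subst this
        exact Or.inr (Or.inl ⟨by omega, rfl⟩)
    · have hji' : i < j := by omega
      have hi1 : i + 1 < t := by omega
      rcases hC5 i hi1 (u j) hx with h' | ⟨j', hj', h'⟩
      · exact absurd h' (hC2 j hj)
      · have : j = j' := hC3 j hj j' (by omega) h'
        have : j = i + 1 := by omega
        subst this
        exact Or.inr (Or.inr ⟨by omega, rfl⟩)

end Chain


theorem nbr_bound {G : SimpleGraph V} {a b : V}
    (hF : ∀ v, Forced G ({b} : Set V) ({a, b} : Set V) v)
    (hV : ∃ c, c ≠ a ∧ c ≠ b) :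
    ∃ x, ∀ y, G.Adj a y → y = b ∨ y = x := by
  obtain ⟨c, hca, hcb⟩ := hV
  have hBne : ({a, b} : Set V) ≠ Set.univ := by
    intro h
    have : c ∈ ({a, b} : Set V) := by rw [h]; trivial
    rcases this with rfl | rfl
    · exact hca rfl
    · exact hcb rfl
  obtain ⟨p, hpB, hpb, w, hpw, hwB, hall⟩ :=
    not_stalled (c := b) (B := {a, b}) hF (Set.mem_insert _ _) (Set.mem_insert_of_mem _ rfl) hBne
  have hpa : p = a := by
    rcases hpB with rfl | rfl
    · rfl
    · exact absurd rfl hpb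
  subst hpa
  refine ⟨w, fun y hy => ?_⟩
  rcases eq_or_ne y w with rfl | hyw
  · exact Or.inr rfl
  · rcases hall y hy hyw with rfl | rfl
    · exact absurd hy (G.loopless.irrefl _)
    · exact Or.inl rfl

noncomputable def isoOfMap {n : ℕ} {G : SimpleGraph V} (φ : Fin n → V) (hbij : Function.Bijective φ)
    (H : SimpleGraph (Fin n)) (hadj : ∀ i j, G.Adj (φ i) (φ j) ↔ H.Adj i j) : G ≃g H where
  toEquiv := (Equiv.ofBijective φ hbij).symm
  map_rel_iff' := by
    intro v w
    rw [← hadj ((Equiv.ofBijective φ hbij).symm v) ((Equiv.ofBijective φ hbij).symm w)]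
    have h1 : φ ((Equiv.ofBijective φ hbij).symm v) = v :=
      (Equiv.ofBijective φ hbij).apply_symm_apply v
    have h2 : φ ((Equiv.ofBijective φ hbij).symm w) = w :=
      (Equiv.ofBijective φ hbij).apply_symm_apply w
    rw [h1, h2]

theorem adj_of_card_two {G : SimpleGraph V} {a b : V} (h : G.Reachable a b) (hab : a ≠ b)
    (hall : ∀ v : V, v = a ∨ v = b) : G.Adj a b := by
  obtain ⟨p⟩ := h
  cases p with
  | nil => exact absurd rfl hab
  | @cons _ v _ h' q =>
    rcases hall v with rfl | rfl
    · exact absurd h' (G.loopless.irrefl _)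
    · exact h'

theorem forward [Fintype V] {G : SimpleGraph V} (hc : G.Connected)
    (hn : 2 ≤ Fintype.card V) {a b : V} (hab : a ≠ b)
    (hS : IsLeakyForcingSet G 1 {a, b}) :
    Nonempty (G ≃g LF.pathGraph (Fintype.card V)) ∨
      Nonempty (G ≃g LF.cycleGraph (Fintype.card V)) := by
  classical
  rcases Nat.lt_or_ge (Fintype.card V) 3 with hlt | h3
  · -- exactly two vertices
    left
    have hcard : Fintype.card V = 2 := by omega
    have huniv : ({a, b} : Finset V) = Finset.univ :=
      Finset.eq_of_subset_of_card_le (Finset.subset_univ _)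
        (by rw [Finset.card_univ, hcard, Finset.card_pair hab])
    have hall : ∀ v : V, v = a ∨ v = b := by
      intro v
      have : v ∈ ({a, b} : Finset V) := huniv ▸ Finset.mem_univ v
      simpa using this
    have hadjab : G.Adj a b := adj_of_card_two (hc.preconnected a b) hab hall
    set φ : Fin (Fintype.card V) → V := fun i => if (i : ℕ) = 0 then a else b with hφ
    have hφ1 : ∀ i : Fin (Fintype.card V), (i : ℕ) = 0 → φ i = a := by
      intro i h; rw [hφ]; simp only; rw [if_pos h]
    have hφ2 : ∀ i : Fin (Fintype.card V), ¬ ((i : ℕ) = 0) → φ i = b := by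
      intro i h; rw [hφ]; simp only; rw [if_neg h]
    have hbij : Function.Bijective φ := by
      constructor
      · intro i j hij
        by_cases h1 : (i : ℕ) = 0 <;> by_cases h2 : (j : ℕ) = 0
        · exact Fin.ext (by omega)
        · rw [hφ1 i h1, hφ2 j h2] at hij; exact absurd hij hab
        · rw [hφ2 i h1, hφ1 j h2] at hij; exact absurd hij.symm hab
        · have := i.isLt; have := j.isLt
          exact Fin.ext (by omega)
      · intro v
        rcases hall v with rfl | rfl
        · exact ⟨⟨0, by omega⟩, hφ1 _ rfl⟩
        · exact ⟨⟨1, by omega⟩, hφ2 _ (by simp)⟩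
    refine ⟨isoOfMap φ hbij _ ?_⟩
    intro i j
    rw [pathGraph_adj]
    have hi : (i : ℕ) < Fintype.card V := i.isLt
    have hj : (j : ℕ) < Fintype.card V := j.isLt
    by_cases h1 : (i : ℕ) = 0 <;> by_cases h2 : (j : ℕ) = 0
    · rw [hφ1 i h1, hφ1 j h2]
      have : i = j := Fin.ext (by omega)
      subst this
      constructor
      · intro h; exact absurd h (G.loopless.irrefl _)
      · rintro ⟨h, _⟩; exact absurd rfl h
    · rw [hφ1 i h1, hφ2 j h2]
      constructor
      · intro _
        exact ⟨by intro h; subst h; omega, Or.inl (by omega)⟩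
      · intro _; exact hadjab
    · rw [hφ2 i h1, hφ1 j h2]
      constructor
      · intro _
        exact ⟨by intro h; subst h; omega, Or.inr (by omega)⟩
      · intro _; exact hadjab.symm
    · rw [hφ2 i h1, hφ2 j h2]
      have : i = j := Fin.ext (by omega)
      subst this
      constructor
      · intro h; exact absurd h (G.loopless.irrefl _)
      · rintro ⟨h, _⟩; exact absurd rfl h
  · -- main case : at least 3 vertices
    have hFa : ∀ v, Forced G ({a} : Set V) ({a, b} : Set V) v :=
      fun v => hS {a} (by simp) v
    have hFb : ∀ v, Forced G ({b} : Set V) ({a, b} : Set V) v :=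
      fun v => hS {b} (by simp) v
    obtain ⟨m, u, hm1, hch, hcov, hmcard⟩ := chain_total hFa hab
    have hm2 : 2 ≤ m := by omega
    have hC1 := hch.1
    have hC2 := hch.2.1
    have hC3 := hch.2.2.1
    have hC4 := hch.2.2.2.1
    have hnbrs := chain_nbrs hch hcov
    have hmem : ∀ v : V, v = a ∨ ∃ i, i < m ∧ v = u i := by
      intro v
      have : v ∈ insert a (u '' Set.Iio m) := by rw [hcov]; trivial
      rcases this with rfl | ⟨i, hi, rfl⟩
      · exact Or.inl rfl
      · exact Or.inr ⟨i, by simpa using hi, rfl⟩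
    have hex : ∃ c, c ≠ a ∧ c ≠ b := by
      refine ⟨u 1, hC2 1 (by omega), ?_⟩
      rw [← hC1]
      intro h
      exact absurd (hC3 1 (by omega) 0 (by omega) h) (by omega)
    obtain ⟨x₀, hx₀⟩ := nbr_bound hFb hex
    have hA1 : G.Adj a (u (m-1)) := by
      by_contra hno
      have hstall : ∀ v, Forced G {u (m-2)} {a, b} v →
          v ∈ (Set.univ \ {u (m-1)} : Set V) := by
        apply forced_closure
        · rintro v (rfl | rfl)
          · exact ⟨trivial, fun h => hC2 (m-1) (by omega) (Set.eq_of_mem_singleton h).symm⟩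
          · refine ⟨trivial, fun h => ?_⟩
            have : u 0 = u (m-1) := by rw [hC1]; exact Set.eq_of_mem_singleton h
            exact absurd (hC3 0 (by omega) (m-1) (by omega) this) (by omega)
        · intro p hp hpL w hpw hwT
          exfalso
          have hw : w = u (m-1) := by
            by_contra hw'
            exact hwT ⟨trivial, hw'⟩
          subst hw
          rcases hmem p with rfl | ⟨i, hi, rfl⟩
          · exact hno hpw
          · rcases hnbrs i hi _ hpw with h' | ⟨hi1, h'⟩ | ⟨hi1, h'⟩
            · exact hC2 (m-1) (by omega) h'
            · have := hC3 (m-1) (by omega) (i-1) (by omega) h'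
              omega
            · have := hC3 (m-1) (by omega) (i+1) (by omega) h'
              have hieq : i = m-2 := by omega
              exact hpL (by rw [hieq]; rfl)
      have := hstall (u (m-1)) (hS {u (m-2)} (by simp) (u (m-1)))
      exact this.2 rfl
    -- is there a second attachment of a (other than at m-1)?
    by_cases hsec : ∃ i, i + 1 < m ∧ G.Adj a (u i)
    · -- cycle case
      right
      obtain ⟨i₀, hi₀m, hAi⟩ := hsec
      have humb : u (m-1) ≠ b := by
        rw [← hC1]
        intro h
        exact absurd (hC3 (m-1) (by omega) 0 (by omega) h) (by omega)
      have hum : u (m-1) = x₀ := by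
        rcases hx₀ (u (m-1)) hA1 with h | h
        · exact absurd h humb
        · exact h
      have hui : u i₀ = b := by
        rcases hx₀ (u i₀) hAi with h | h
        · exact h
        · rw [← hum] at h
          exact absurd (hC3 i₀ (by omega) (m-1) (by omega) h) (by omega)
      have hi₀ : i₀ = 0 := hC3 i₀ (by omega) 0 (by omega) (by rw [hui, hC1])
      subst hi₀
      have hAb : G.Adj a (u 0) := hAi
      have hay : ∀ y, G.Adj a y → y = u 0 ∨ y = u (m-1) := by
        intro y hy
        rcases hx₀ y hy with h | h
        · left; rw [h, ← hC1]
        · right; rw [h, hum]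
      set n := Fintype.card V with hndef
      have hmn : m + 1 = n := hmcard
      set φ : Fin n → V := fun i => if h : (i : ℕ) < m then u (i : ℕ) else a with hφ
      have hφ1 : ∀ (i : Fin n), (i : ℕ) < m → φ i = u (i : ℕ) := by
        intro i h; rw [hφ]; simp only; rw [dif_pos h]
      have hφ2 : ∀ (i : Fin n), ¬ ((i : ℕ) < m) → φ i = a := by
        intro i h; rw [hφ]; simp only; rw [dif_neg h]
      have hbij : Function.Bijective φ := by
        constructor
        · intro i j hij
          by_cases h1 : (i : ℕ) < m <;> by_cases h2 : (j : ℕ) < m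
          · rw [hφ1 i h1, hφ1 j h2] at hij
            exact Fin.ext (hC3 _ h1 _ h2 hij)
          · rw [hφ1 i h1, hφ2 j h2] at hij
            exact absurd hij (hC2 _ h1)
          · rw [hφ2 i h1, hφ1 j h2] at hij
            exact absurd hij.symm (hC2 _ h2)
          · apply Fin.ext
            have := i.isLt; have := j.isLt
            omega
        · intro v
          rcases hmem v with rfl | ⟨i, hi, rfl⟩
          · exact ⟨⟨m, by omega⟩, hφ2 _ (by simp)⟩
          · exact ⟨⟨i, by omega⟩, hφ1 _ (by simpa using hi)⟩
      refine ⟨isoOfMap φ hbij _ ?_⟩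
      intro i j
      rw [cycleGraph_adj]
      have hi := i.isLt
      have hj := j.isLt
      by_cases h1 : (i : ℕ) < m <;> by_cases h2 : (j : ℕ) < m
      · rw [hφ1 i h1, hφ1 j h2]
        constructor
        · intro h
          rcases hnbrs _ h1 _ h with h' | ⟨hi1, h'⟩ | ⟨hi1, h'⟩
          · exact absurd h' (hC2 _ h2)
          · have := hC3 _ h2 _ (by omega) h'
            refine ⟨by intro hh; subst hh; omega, Or.inr ?_⟩
            rw [Nat.mod_eq_of_lt (by omega)]
            omega
          · have := hC3 _ h2 _ (by omega) h'
            refine ⟨by intro hh; subst hh; omega, Or.inl ?_⟩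
            rw [Nat.mod_eq_of_lt (by omega)]
            omega
        · rintro ⟨hne, h' | h'⟩
          · rw [Nat.mod_eq_of_lt (by omega)] at h'
            have : (j : ℕ) = (i : ℕ) + 1 := by omega
            rw [this]
            exact hC4 _ (by omega)
          · rw [Nat.mod_eq_of_lt (by omega)] at h'
            have : (i : ℕ) = (j : ℕ) + 1 := by omega
            rw [this]
            exact (hC4 _ (by omega)).symm
      · -- j is the vertex a
        have hj2 : (j : ℕ) = m := by omega
        rw [hφ1 i h1, hφ2 j (by omega)]
        constructor
        · intro h
          rcases hay _ h.symm with h' | h'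
          · have : (i : ℕ) = 0 := hC3 _ h1 0 (by omega) h'
            refine ⟨by intro hh; subst hh; omega, Or.inr ?_⟩
            rw [hj2, this, show m + 1 = n by omega, Nat.mod_self]
          · have : (i : ℕ) = m - 1 := hC3 _ h1 _ (by omega) h'
            refine ⟨by intro hh; subst hh; omega, Or.inl ?_⟩
            rw [this, Nat.mod_eq_of_lt (by omega), hj2]
            omega
        · rintro ⟨hne, h' | h'⟩
          · rw [Nat.mod_eq_of_lt (by omega), hj2] at h'
            have : (i : ℕ) = m - 1 := by omega
            rw [this]
            exact hA1.symm
          · rw [hj2, show m + 1 = n by omega, Nat.mod_self] at h'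
            have : (i : ℕ) = 0 := by omega
            rw [this]
            exact hAb.symm
      · -- i is the vertex a
        have hi2 : (i : ℕ) = m := by omega
        rw [hφ2 i (by omega), hφ1 j h2]
        constructor
        · intro h
          rcases hay _ h with h' | h'
          · have : (j : ℕ) = 0 := hC3 _ h2 0 (by omega) h'
            refine ⟨by intro hh; subst hh; omega, Or.inl ?_⟩
            rw [hi2, show m + 1 = n by omega, Nat.mod_self]
            omega
          · have : (j : ℕ) = m - 1 := hC3 _ h2 _ (by omega) h'
            refine ⟨by intro hh; subst hh; omega, Or.inr ?_⟩
            rw [this, Nat.mod_eq_of_lt (by omega), hi2]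
            omega
        · rintro ⟨hne, h' | h'⟩
          · rw [hi2, show m + 1 = n by omega, Nat.mod_self] at h'
            have : (j : ℕ) = 0 := by omega
            rw [this]
            exact hAb
          · rw [Nat.mod_eq_of_lt (by omega), hi2] at h'
            have : (j : ℕ) = m - 1 := by omega
            rw [this]
            exact hA1
      · -- both are a : i = j
        rw [hφ2 i (by omega), hφ2 j (by omega)]
        have : i = j := Fin.ext (by omega)
        subst this
        simp [G.loopless]
    · -- path case
      left
      push_neg at hsec
      have hay : ∀ y, G.Adj a y → y = u (m-1) := by
        intro y hy
        rcases hmem y with rfl | ⟨i, hi, rfl⟩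
        · exact absurd hy (G.loopless.irrefl _)
        · have : ¬ (i + 1 < m) := fun h => (hsec i h) hy
          have : i = m - 1 := by omega
          rw [this]
      set n := Fintype.card V with hndef
      have hmn : m + 1 = n := hmcard
      set φ : Fin n → V := fun i => if h : (i : ℕ) < m then u (i : ℕ) else a with hφ
      have hφ1 : ∀ (i : Fin n), (i : ℕ) < m → φ i = u (i : ℕ) := by
        intro i h; rw [hφ]; simp only; rw [dif_pos h]
      have hφ2 : ∀ (i : Fin n), ¬ ((i : ℕ) < m) → φ i = a := by
        intro i h; rw [hφ]; simp only; rw [dif_neg h]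
      have hbij : Function.Bijective φ := by
        constructor
        · intro i j hij
          by_cases h1 : (i : ℕ) < m <;> by_cases h2 : (j : ℕ) < m
          · rw [hφ1 i h1, hφ1 j h2] at hij
            exact Fin.ext (hC3 _ h1 _ h2 hij)
          · rw [hφ1 i h1, hφ2 j h2] at hij
            exact absurd hij (hC2 _ h1)
          · rw [hφ2 i h1, hφ1 j h2] at hij
            exact absurd hij.symm (hC2 _ h2)
          · apply Fin.ext
            have := i.isLt; have := j.isLt
            omega
        · intro v
          rcases hmem v with rfl | ⟨i, hi, rfl⟩
          · exact ⟨⟨m, by omega⟩, hφ2 _ (by simp)⟩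
          · exact ⟨⟨i, by omega⟩, hφ1 _ (by simpa using hi)⟩
      refine ⟨isoOfMap φ hbij _ ?_⟩
      intro i j
      rw [pathGraph_adj]
      have hi := i.isLt
      have hj := j.isLt
      by_cases h1 : (i : ℕ) < m <;> by_cases h2 : (j : ℕ) < m
      · rw [hφ1 i h1, hφ1 j h2]
        constructor
        · intro h
          rcases hnbrs _ h1 _ h with h' | ⟨hi1, h'⟩ | ⟨hi1, h'⟩
          · exact absurd h' (hC2 _ h2)
          · have := hC3 _ h2 _ (by omega) h'
            exact ⟨by intro hh; subst hh; omega, Or.inr (by omega)⟩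
          · have := hC3 _ h2 _ (by omega) h'
            exact ⟨by intro hh; subst hh; omega, Or.inl (by omega)⟩
        · rintro ⟨hne, h' | h'⟩
          · have : (j : ℕ) = (i : ℕ) + 1 := by omega
            rw [this]
            exact hC4 _ (by omega)
          · have : (i : ℕ) = (j : ℕ) + 1 := by omega
            rw [this]
            exact (hC4 _ (by omega)).symm
      · have hj2 : (j : ℕ) = m := by omega
        rw [hφ1 i h1, hφ2 j (by omega)]
        constructor
        · intro h
          have h' := hay _ h.symm
          have : (i : ℕ) = m - 1 := hC3 _ h1 _ (by omega) h'
          exact ⟨by intro hh; subst hh; omega, Or.inl (by omega)⟩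
        · rintro ⟨hne, h' | h'⟩
          · have : (i : ℕ) = m - 1 := by omega
            rw [this]
            exact hA1.symm
          · omega
      · have hi2 : (i : ℕ) = m := by omega
        rw [hφ2 i (by omega), hφ1 j h2]
        constructor
        · intro h
          have h' := hay _ h
          have : (j : ℕ) = m - 1 := hC3 _ h2 _ (by omega) h'
          exact ⟨by intro hh; subst hh; omega, Or.inr (by omega)⟩
        · rintro ⟨hne, h' | h'⟩
          · omega
          · have : (j : ℕ) = m - 1 := by omega
            rw [this]
            exact hA1
      · rw [hφ2 i (by omega), hφ2 j (by omega)]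
        have : i = j := Fin.ext (by omega)
        subst this
        simp [G.loopless]


theorem stmt16' {V : Type*} [Fintype V] (G : SimpleGraph V) (hc : G.Connected)
    (hn : 2 ≤ Fintype.card V) :
    LF.leakyForcingNumber G 1 = 2 ↔
      (Nonempty (G ≃g LF.pathGraph (Fintype.card V)) ∨
       Nonempty (G ≃g LF.cycleGraph (Fintype.card V))) := by
  classical
  constructor
  · intro h
    have h2 : sInf {k | ∃ S : Finset V, S.card = k ∧ IsLeakyForcingSet G 1 ↑S} = 2 := h
    have hne : {k | ∃ S : Finset V, S.card = k ∧ IsLeakyForcingSet G 1 ↑S}.Nonempty := by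
      by_contra h'
      rw [Set.not_nonempty_iff_eq_empty.1 h', Nat.sInf_empty] at h2
      omega
    obtain ⟨S, hScard, hSf⟩ := Nat.sInf_mem hne
    rw [h2] at hScard
    obtain ⟨a, b, hab, hSab⟩ := Finset.card_eq_two.1 hScard
    have hcoe : (↑S : Set V) = {a, b} := by rw [hSab]; simp
    rw [hcoe] at hSf
    exact forward hc hn hab hSf
  · intro h
    rcases h with he | he
    · obtain ⟨e⟩ := he
      rw [leakyForcingNumber_congr e 1]
      exact pathGraph_number hn
    · obtain ⟨e⟩ := he
      rw [leakyForcingNumber_congr e 1]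
      exact cycleGraph_number hn

end LFAux

theorem stmt16 {V : Type*} [Fintype V] (G : SimpleGraph V) (hc : G.Connected)
    (hn : 2 ≤ Fintype.card V) :
    LF.leakyForcingNumber G 1 = 2 ↔
      (Nonempty (G ≃g LF.pathGraph (Fintype.card V)) ∨
       Nonempty (G ≃g LF.cycleGraph (Fintype.card V))) :=
  LFAux.stmt16' G hc hn
end
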